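/- arXiv:2201.04824 — 5 statements merged into one kernel-verified Lean document; each statement's English description precedes it below -/
import Mathlib

section
/- Let k ≥ 3, s with k > s ≥ 1, n = (n_1,…,n_k) and r ≤ min{n_1,…,n_s}. Suppose a tensor A ∈ P_s(n,r) has a decomposition A = Σ_{i=1}^r σ_i a_i^{(1)}⊗⋯⊗a_i^{(k)} (unit-norm columns, orthonormal factor matrices A^{(1)},…,A^{(s)}) in which the factor matrices A^{(s+1)},…,A^{(k)} all have full column rank r. Then A is identifiable: its rank decomposition is essentially unique, i.e., any two rank decompositions of A into rank(A) rank-one terms agree up to a permutation of the summands and scalings of the factor vectors whose product over each summand is 1. Moreover, if s ≥ 3, then every tensor in P_s(n,r) is identifiable. -/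
open scoped BigOperators

namespace POT

variable {k : ℕ}

/-- The multi-index set of a `k`-way tensor of dimensions `n`. -/
abbrev Idx {k : ℕ} (n : Fin k → ℕ) : Type := (i : Fin k) → Fin (n i)

/-- A real tensor in `ℝ^{n₁} ⊗ ⋯ ⊗ ℝ^{n_k}`, represented by its entries. -/
abbrev Tensor {k : ℕ} (n : Fin k → ℕ) : Type := Idx n → ℝ

/-- A tuple of factor matrices with `r` columns: `Fac n r i j` is the `j`-th column
of the `i`-th factor matrix, as a vector in `ℝ^{n i}`. -/
abbrev Fac {k : ℕ} (n : Fin k → ℕ) (r : ℕ) : Type := (i : Fin k) → Fin r → Fin (n i) → ℝ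

/-- All columns of the matrix `U` (stored column-wise) have unit Euclidean norm. -/
def unitCols {m r : ℕ} (U : Fin r → Fin m → ℝ) : Prop :=
  ∀ j, (∑ t, U j t * U j t) = 1

/-- The columns of the matrix `U` (stored column-wise) are orthonormal. -/
def orthoCols {m r : ℕ} (U : Fin r → Fin m → ℝ) : Prop :=
  ∀ j j', (∑ t, U j t * U j' t) = if j = j' then (1 : ℝ) else 0

/-- The tensor `∑ j, σ j • a¹_j ⊗ ⋯ ⊗ aᵏ_j`. -/
def decomp {n : Fin k → ℕ} {r : ℕ} (σ : Fin r → ℝ) (a : Fac n r) : Tensor n :=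
  fun idx => ∑ j, σ j * ∏ i, a i j (idx i)

/-- Membership in `P_s(n,r)`: partially orthogonal tensors of rank at most `r`
with the first `s` factor matrices orthonormal. -/
def memP (s r : ℕ) {n : Fin k → ℕ} (A : Tensor n) : Prop :=
  ∃ (σ : Fin r → ℝ) (a : Fac n r),
    (∀ i, unitCols (a i)) ∧
    (∀ i : Fin k, (i : ℕ) < s → orthoCols (a i)) ∧
    A = decomp σ a

/-- Membership in `Q_s(n,r)`: decomposition can be chosen with factor matrices
`s+1, …, k` of full column rank. -/
def memQ (s r : ℕ) {n : Fin k → ℕ} (A : Tensor n) : Prop :=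
  ∃ (σ : Fin r → ℝ) (a : Fac n r),
    (∀ i, unitCols (a i)) ∧
    (∀ i : Fin k, (i : ℕ) < s → orthoCols (a i)) ∧
    (∀ i : Fin k, s ≤ (i : ℕ) → LinearIndependent ℝ (a i)) ∧
    A = decomp σ a

/-- Membership in `R_s(n,r)`: as `Q_s(n,r)` but with all coefficients nonzero. -/
def memR (s r : ℕ) {n : Fin k → ℕ} (A : Tensor n) : Prop :=
  ∃ (σ : Fin r → ℝ) (a : Fac n r),
    (∀ j, σ j ≠ 0) ∧
    (∀ i, unitCols (a i)) ∧
    (∀ i : Fin k, (i : ℕ) < s → orthoCols (a i)) ∧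
    (∀ i : Fin k, s ≤ (i : ℕ) → LinearIndependent ℝ (a i)) ∧
    A = decomp σ a

/-- The (CP) rank of a tensor: the least number of rank-one summands. -/
noncomputable def trank {n : Fin k → ℕ} (A : Tensor n) : ℕ :=
  sInf {m : ℕ | ∃ a : Fin m → (i : Fin k) → Fin (n i) → ℝ,
    A = fun idx => ∑ j, ∏ i, a j i (idx i)}

/-- Essential uniqueness of the rank decomposition: any two decompositions of `A`
into `rank A` unit-norm rank-one summands agree up to permutation and scalings
whose product over each summand is `1`. -/
def Identifiable {n : Fin k → ℕ} (A : Tensor n) : Prop :=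
  ∀ R : ℕ, trank A = R →
    ∀ (lam mu : Fin R → ℝ) (u v : Fac n R),
      (∀ i, unitCols (u i)) → (∀ i, unitCols (v i)) →
      A = decomp lam u → A = decomp mu v →
      ∃ (π : Equiv.Perm (Fin R)) (α : Fin k → Fin R → ℝ),
        (∀ i j, α i j ≠ 0) ∧
        (∀ i j t, v i (π j) t = α i j * u i j t) ∧
        (∀ j, (∏ i, α i j) * mu (π j) = lam j)

/-- The Hilbert–Schmidt inner product of two tensors. -/
def tdot {n : Fin k → ℕ} (A B : Tensor n) : ℝ := ∑ idx, A idx * B idx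

/-- The parameter space `∏ᵢ ℝ^{nᵢ × r} × ℝ^r`. -/
abbrev PSpace (n : Fin k → ℕ) (r : ℕ) : Type := Fac n r × (Fin r → ℝ)

/-- The parametrization map `φ_{n,r}(U, λ) = ∑ j, λ_j u_j^{(1)} ⊗ ⋯ ⊗ u_j^{(k)}`. -/
def phi {n : Fin k → ℕ} {r : ℕ} (y : PSpace n r) : Tensor n :=
  fun idx => ∑ j, y.2 j * ∏ i, y.1 i j (idx i)

/-- Feasibility of a tuple of factor matrices: unit-norm columns everywhere,
orthonormal columns in the first `s` factor matrices. -/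
def Feas (s : ℕ) {n : Fin k → ℕ} {r : ℕ} (U : Fac n r) : Prop :=
  (∀ i, unitCols (U i)) ∧ ∀ i : Fin k, (i : ℕ) < s → orthoCols (U i)

/-- `V_{n,r} = V(r,n₁) × ⋯ × V(r,n_s) × B(r,n_{s+1}) × ⋯ × B(r,n_k) × ℝ^r`. -/
def Vset (s : ℕ) (n : Fin k → ℕ) (r : ℕ) : Set (PSpace n r) :=
  {y | Feas s y.1}

/-- `W_{n,r}`: the last `k - s` factor matrices have full column rank. -/
def Wset (s : ℕ) (n : Fin k → ℕ) (r : ℕ) : Set (PSpace n r) :=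
  {y | y ∈ Vset s n r ∧ ∀ i : Fin k, s ≤ (i : ℕ) → LinearIndependent ℝ (y.1 i)}

/-- `W_{n,r,∗}`: additionally all coefficients are nonzero. -/
def WsetStar (s : ℕ) (n : Fin k → ℕ) (r : ℕ) : Set (PSpace n r) :=
  {y | y ∈ Wset s n r ∧ ∀ j, y.2 j ≠ 0}

/-- `W_{n,r,+}`: additionally all coefficients are nonnegative. -/
def WsetPlus (s : ℕ) (n : Fin k → ℕ) (r : ℕ) : Set (PSpace n r) :=
  {y | y ∈ Wset s n r ∧ ∀ j, 0 ≤ y.2 j}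

/-- `W_{n,r,++}`: additionally all coefficients are positive. -/
def WsetPP (s : ℕ) (n : Fin k → ℕ) (r : ℕ) : Set (PSpace n r) :=
  {y | y ∈ Wset s n r ∧ ∀ j, 0 < y.2 j}

/-- The squared-distance objective `g(U,x) = ½ ‖A − φ(U,x)‖²`. -/
noncomputable def gfun {n : Fin k → ℕ} {r : ℕ} (A : Tensor n) (y : PSpace n r) : ℝ :=
  (1 / 2) * tdot (fun e => A e - phi y e) (fun e => A e - phi y e)

/-- `v` is a tangent vector of the set `M` at `x`: it is the velocity of a smooth
curve through `x` lying in `M`. -/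
def InTangent {E : Type*} [NormedAddCommGroup E] [NormedSpace ℝ E]
    (M : Set E) (x v : E) : Prop :=
  ∃ γ : ℝ → E, ContDiff ℝ (⊤ : ℕ∞) γ ∧ (∀ t, γ t ∈ M) ∧ γ 0 = x ∧ HasDerivAt γ v 0

/-- `x` is a critical point of `g` restricted to `M`: the derivative of `g` along
every smooth curve in `M` through `x` vanishes. -/
def IsCriticalOn {E : Type*} [NormedAddCommGroup E] [NormedSpace ℝ E]
    (g : E → ℝ) (M : Set E) (x : E) : Prop :=
  x ∈ M ∧ ∀ γ : ℝ → E, ContDiff ℝ (⊤ : ℕ∞) γ → (∀ t, γ t ∈ M) → γ 0 = x →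
    deriv (g ∘ γ) 0 = 0

/-- `x` is a nondegenerate critical point of `g` on `M`: critical, and the Hessian
quadratic form `Q` (given by second derivatives of `g` along curves) induces a
nondegenerate bilinear form on the tangent space of `M` at `x`. -/
def IsNondegCriticalOn {E : Type*} [NormedAddCommGroup E] [NormedSpace ℝ E]
    (g : E → ℝ) (M : Set E) (x : E) : Prop :=
  IsCriticalOn g M x ∧
  ∃ Q : E → ℝ,
    (∀ (v : E) (γ : ℝ → E), ContDiff ℝ (⊤ : ℕ∞) γ → (∀ t, γ t ∈ M) → γ 0 = x →
      HasDerivAt γ v 0 → iteratedDeriv 2 (g ∘ γ) 0 = Q v) ∧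
    (∀ v, InTangent M x v → v ≠ 0 → ∃ w, InTangent M x w ∧ Q (v + w) ≠ Q v + Q w)

/-- The contraction `A τ_i(x)` of `A` with all columns `u l` except the `i`-th one,
a vector in `ℝ^{n i}`. -/
noncomputable def ctr {n : Fin k → ℕ} (A : Tensor n) (u : (l : Fin k) → Fin (n l) → ℝ)
    (i : Fin k) (t : Fin (n i)) : ℝ :=
  ∑ idx : Idx n, if idx i = t then A idx * ∏ l ∈ Finset.univ.erase i, u l (idx l) else 0

/-- `λ_j(U) = ⟨A, u_j^{(1)} ⊗ ⋯ ⊗ u_j^{(k)}⟩`. -/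
def lamOf {n : Fin k → ℕ} {r : ℕ} (A : Tensor n) (U : Fac n r) (j : Fin r) : ℝ :=
  ∑ idx : Idx n, A idx * ∏ l, U l j (idx l)

/-- KKT point of (LRPOTA)/(mLRPOTA): feasibility, `x j = λ_j(U)`, and stationarity
`V^{(i)} Λ = U^{(i)} P_i` (with `P_i` symmetric) for `i ≤ s`, and
`V^{(i)} Λ = U^{(i)} diag p` for `i > s`. -/
def IsKKT (s : ℕ) {n : Fin k → ℕ} {r : ℕ} (A : Tensor n) (U : Fac n r)
    (x : Fin r → ℝ) : Prop :=
  Feas s U ∧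
  (∀ j, x j = lamOf A U j) ∧
  (∀ i : Fin k, (i : ℕ) < s → ∃ P : Matrix (Fin r) (Fin r) ℝ, P.IsSymm ∧
    ∀ j t, ctr A (fun l => U l j) i t * x j = ∑ l, U i l t * P l j) ∧
  (∃ p : Fin r → ℝ, ∀ i : Fin k, s ≤ (i : ℕ) → ∀ j t,
    ctr A (fun l => U l j) i t * x j = U i j t * p j)

/-- KKT point of (LRPOTA) in the parameter space `V_{n,r}`: the residual
`A − φ(y)` is orthogonal to the image of the tangent space under `dφ_y`. -/
def IsKKTparam (s : ℕ) {n : Fin k → ℕ} {r : ℕ} (A : Tensor n) (y : PSpace n r) : Prop :=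
  y ∈ Vset s n r ∧
  ∀ (γ : ℝ → PSpace n r) (w : Tensor n),
    ContDiff ℝ (⊤ : ℕ∞) γ → (∀ t, γ t ∈ Vset s n r) → γ 0 = y →
    HasDerivAt (fun t => phi (γ t)) w 0 →
    tdot (fun e => A e - phi y e) w = 0

/-- The common zero set of a family of real polynomials. -/
def zeroSet {σ : Type*} (S : Set (MvPolynomial σ ℝ)) : Set (σ → ℝ) :=
  {x | ∀ p ∈ S, MvPolynomial.eval x p = 0}

/-- A real algebraic variety: the common zero set of a family of polynomials. -/
def IsRealVariety {σ : Type*} (V : Set (σ → ℝ)) : Prop := ∃ S, V = zeroSet S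

/-- `x` is a smooth point of `S` of dimension `d`: near `x`, the set `S` is smoothly
parametrized by an open subset of `ℝ^d` (with a smooth ambient inverse chart). -/
def SmoothPt {E : Type*} [NormedAddCommGroup E] [NormedSpace ℝ E]
    (S : Set E) (d : ℕ) (x : E) : Prop :=
  ∃ (U : Set E) (O : Set (Fin d → ℝ)) (f : E → Fin d → ℝ) (g : (Fin d → ℝ) → E),
    IsOpen U ∧ x ∈ U ∧ IsOpen O ∧ ContDiff ℝ (⊤ : ℕ∞) f ∧ ContDiff ℝ (⊤ : ℕ∞) g ∧
    g '' O = S ∩ U ∧ (∀ z ∈ S ∩ U, g (f z) = z) ∧ (∀ w ∈ O, f (g w) = w)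

/-- `S` is a smooth embedded submanifold of dimension `d`. -/
def IsSmoothMfldDim {E : Type*} [NormedAddCommGroup E] [NormedSpace ℝ E]
    (S : Set E) (d : ℕ) : Prop :=
  ∀ x ∈ S, SmoothPt S d x


/-- The mLRPOTA objective `f(U) = ∑ j, λ_j(U)²`. -/
noncomputable def fOf {n : Fin k → ℕ} {r : ℕ} (A : Tensor n) (U : Fac n r) : ℝ :=
  ∑ j, (lamOf A U j) ^ 2

/-- The squared residual `‖A − φ(y)‖²`. -/
noncomputable def resid {n : Fin k → ℕ} {r : ℕ} (A : Tensor n) (y : PSpace n r) : ℝ :=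
  tdot (fun e => A e - phi y e) (fun e => A e - phi y e)


noncomputable section Work
open Finset


def dotR {α : Type*} [Fintype α] (x y : α → ℝ) : ℝ := ∑ t, x t * y t

def ebasis {α : Type*} [DecidableEq α] (t : α) : α → ℝ := fun s => if t = s then 1 else 0

lemma dotR_ebasis {α : Type*} [Fintype α] [DecidableEq α] (x : α → ℝ) (t : α) :
    dotR x (ebasis t) = x t := by
  unfold dotR ebasis
  simp [mul_ite, Finset.sum_ite_eq]

lemma exists_dual {α : Type*} [Fintype α] {R : ℕ} {w : Fin R → α → ℝ}
    (hw : LinearIndependent ℝ w) :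
    ∃ d : Fin R → α → ℝ, ∀ j j', dotR (w j') (d j) = if j = j' then 1 else 0 := by
  classical
  let T : (Fin R → ℝ) →ₗ[ℝ] (α → ℝ) :=
    { toFun := fun c => ∑ j, c j • w j
      map_add' := by intro c c'; simp [add_smul, Finset.sum_add_distrib]
      map_smul' := by intro s c; simp [smul_smul, Finset.smul_sum] }
  have hker : LinearMap.ker T = ⊥ := by
    rw [LinearMap.ker_eq_bot']
    intro c hc
    funext j
    exact Fintype.linearIndependent_iff.mp hw c hc j
  obtain ⟨g, hg⟩ := T.exists_leftInverse_of_injective hker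
  refine ⟨fun j t => g (ebasis t) j, fun j j' => ?_⟩
  have hx : (∑ t, w j' t • ebasis t) = w j' := by
    funext s
    rw [Finset.sum_apply]
    unfold ebasis
    simp [mul_ite, Finset.sum_ite_eq]
  have hT : T (ebasis j') = w j' := by
    show (∑ j, ebasis j' j • w j) = w j'
    rw [Finset.sum_eq_single j']
    · simp [ebasis]
    · intro b _ hb
      have : ebasis j' b = 0 := by simp [ebasis, Ne.symm hb]
      rw [this, zero_smul]
    · intro h; exact absurd (mem_univ j') h
  have step : dotR (w j') (fun t => g (ebasis t) j) = g (w j') j := by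
    calc dotR (w j') (fun t => g (ebasis t) j)
        = ∑ t, (w j' t • g (ebasis t)) j := by
          refine Finset.sum_congr rfl fun t _ => ?_
          rw [Pi.smul_apply, smul_eq_mul]
      _ = (∑ t, w j' t • g (ebasis t)) j := (Finset.sum_apply _ _ _).symm
      _ = g (∑ t, w j' t • ebasis t) j := by
          have hfun : (∑ t, w j' t • g (ebasis t)) = g (∑ t, w j' t • ebasis t) := by
            rw [map_sum]
            exact Finset.sum_congr rfl fun t _ => (map_smul g _ _).symm
          rw [hfun]
      _ = g (w j') j := by rw [hx]
  rw [step, ← hT, ← LinearMap.comp_apply, hg, LinearMap.id_apply]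
  unfold ebasis
  exact if_congr eq_comm rfl rfl

lemma li_unique_parallel {α : Type*} [Fintype α] {R : ℕ} {w : Fin R → α → ℝ}
    (hw : LinearIndependent ℝ w) {j1 j2 : Fin R} {z : α → ℝ} {b1 b2 : ℝ}
    (hb1 : b1 ≠ 0) (hb2 : b2 ≠ 0)
    (h1 : ∀ t, w j1 t = b1 * z t) (h2 : ∀ t, w j2 t = b2 * z t) : j1 = j2 := by
  by_contra hne
  obtain ⟨d, hd⟩ := exists_dual hw
  have f1 : dotR (w j1) (d j1) = b1 * dotR z (d j1) := by
    unfold dotR; rw [Finset.mul_sum]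
    exact Finset.sum_congr rfl fun t _ => by rw [h1 t]; ring
  have f2 : dotR (w j2) (d j1) = b2 * dotR z (d j1) := by
    unfold dotR; rw [Finset.mul_sum]
    exact Finset.sum_congr rfl fun t _ => by rw [h2 t]; ring
  have e1 : dotR (w j1) (d j1) = 1 := by rw [hd]; simp
  have e2 : dotR (w j2) (d j1) = 0 := by rw [hd]; simp [hne]
  have hz0 : dotR z (d j1) = 0 := by
    have := f2.symm.trans e2
    exact (mul_eq_zero.mp this).resolve_left hb2
  rw [f1, hz0, mul_zero] at e1
  norm_num at e1

section
variable {α β γ : Type*} [Fintype α] [Fintype β] [Fintype γ]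

def T3 {R : ℕ} (lam : Fin R → ℝ) (p : Fin R → α → ℝ) (q : Fin R → β → ℝ)
    (w : Fin R → γ → ℝ) : α × β × γ → ℝ :=
  fun t => ∑ j, lam j * (p j t.1 * (q j t.2.1 * w j t.2.2))

lemma sum_prod_mul {μ ν : Type*} [Fintype μ] [Fintype ν] (F : μ → ℝ) (G : ν → ℝ) :
    ∑ t : μ × ν, F t.1 * G t.2 = (∑ x, F x) * (∑ y, G y) := by
  rw [Finset.sum_mul_sum, Fintype.sum_prod_type]

lemma master3 {R : ℕ} (lam : Fin R → ℝ) (p : Fin R → α → ℝ) (q : Fin R → β → ℝ)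
    (w : Fin R → γ → ℝ) (f : α → ℝ) (g : β → ℝ) (h : γ → ℝ) :
    ∑ t : α × β × γ, T3 lam p q w t * (f t.1 * (g t.2.1 * h t.2.2)) =
    ∑ j, lam j * (dotR (p j) f * (dotR (q j) g * dotR (w j) h)) := by
  have e1 : ∀ t : α × β × γ, T3 lam p q w t * (f t.1 * (g t.2.1 * h t.2.2))
      = ∑ j, lam j * ((p j t.1 * f t.1) * ((q j t.2.1 * g t.2.1) * (w j t.2.2 * h t.2.2))) := by
    intro t
    rw [T3, Finset.sum_mul]
    exact Finset.sum_congr rfl fun j _ => by ring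
  rw [Finset.sum_congr rfl fun t _ => e1 t, Finset.sum_comm]
  refine Finset.sum_congr rfl fun j _ => ?_
  rw [← Finset.mul_sum]
  congr 1
  have e2 := sum_prod_mul (fun x => p j x * f x)
    (fun yz : β × γ => (q j yz.1 * g yz.1) * (w j yz.2 * h yz.2))
  rw [e2, sum_prod_mul (fun y => q j y * g y) (fun z => w j z * h z)]
  rfl

def pairEq {R R2 : ℕ} (lam : Fin R → ℝ) (p : Fin R → α → ℝ) (q : Fin R → β → ℝ)
    (w : Fin R → γ → ℝ) (mu : Fin R2 → ℝ) (p' : Fin R2 → α → ℝ) (q' : Fin R2 → β → ℝ)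
    (w' : Fin R2 → γ → ℝ) : Prop :=
  ∀ (f : α → ℝ) (g : β → ℝ) (h : γ → ℝ),
    ∑ j, lam j * (dotR (p j) f * (dotR (q j) g * dotR (w j) h)) =
    ∑ j, mu j * (dotR (p' j) f * (dotR (q' j) g * dotR (w' j) h))

lemma pairEq_of_eq {R R2 : ℕ} {lam : Fin R → ℝ} {p : Fin R → α → ℝ} {q : Fin R → β → ℝ}
    {w : Fin R → γ → ℝ} {mu : Fin R2 → ℝ} {p' : Fin R2 → α → ℝ} {q' : Fin R2 → β → ℝ}
    {w' : Fin R2 → γ → ℝ} (hE : T3 lam p q w = T3 mu p' q' w') :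
    pairEq lam p q w mu p' q' w' := by
  intro f g h
  rw [← master3, ← master3, hE]

lemma pairEq.swap12 {R R2 : ℕ} {lam : Fin R → ℝ} {p : Fin R → α → ℝ} {q : Fin R → β → ℝ}
    {w : Fin R → γ → ℝ} {mu : Fin R2 → ℝ} {p' : Fin R2 → α → ℝ} {q' : Fin R2 → β → ℝ}
    {w' : Fin R2 → γ → ℝ} (hE : pairEq lam p q w mu p' q' w') :
    pairEq lam q p w mu q' p' w' := by
  intro g f h
  have := hE f g h
  calc ∑ j, lam j * (dotR (q j) g * (dotR (p j) f * dotR (w j) h))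
      = ∑ j, lam j * (dotR (p j) f * (dotR (q j) g * dotR (w j) h)) :=
        Finset.sum_congr rfl fun j _ => by ring
    _ = ∑ j, mu j * (dotR (p' j) f * (dotR (q' j) g * dotR (w' j) h)) := this
    _ = ∑ j, mu j * (dotR (q' j) g * (dotR (p' j) f * dotR (w' j) h)) :=
        Finset.sum_congr rfl fun j _ => by ring

lemma pairEq.swap13 {R R2 : ℕ} {lam : Fin R → ℝ} {p : Fin R → α → ℝ} {q : Fin R → β → ℝ}
    {w : Fin R → γ → ℝ} {mu : Fin R2 → ℝ} {p' : Fin R2 → α → ℝ} {q' : Fin R2 → β → ℝ}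
    {w' : Fin R2 → γ → ℝ} (hE : pairEq lam p q w mu p' q' w') :
    pairEq lam w q p mu w' q' p' := by
  intro h g f
  have := hE f g h
  calc ∑ j, lam j * (dotR (w j) h * (dotR (q j) g * dotR (p j) f))
      = ∑ j, lam j * (dotR (p j) f * (dotR (q j) g * dotR (w j) h)) :=
        Finset.sum_congr rfl fun j _ => by ring
    _ = ∑ j, mu j * (dotR (p' j) f * (dotR (q' j) g * dotR (w' j) h)) := this
    _ = ∑ j, mu j * (dotR (w' j) h * (dotR (q' j) g * dotR (p' j) f)) :=
        Finset.sum_congr rfl fun j _ => by ring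

end

section
variable {α β γ : Type*} [Fintype α] [Fintype β] [Fintype γ]

/-- Collapse lemma: matching of one summand in the second decomposition. -/
lemma collapse {R : ℕ} {lam mu : Fin R → ℝ} {p p' : Fin R → α → ℝ} {q q' : Fin R → β → ℝ}
    {w w' : Fin R → γ → ℝ}
    (hp : LinearIndependent ℝ p) (hq : LinearIndependent ℝ q) (hw : LinearIndependent ℝ w)
    (hq' : LinearIndependent ℝ q') (hw' : LinearIndependent ℝ w')
    (hE : pairEq lam p q w mu p' q' w') (m : Fin R) (hlam : lam m ≠ 0) :
    ∃ j, ∃ b2 b3 : ℝ, b2 ≠ 0 ∧ b3 ≠ 0 ∧ (∀ y, q' j y = b2 * q m y) ∧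
      (∀ z, w' j z = b3 * w m z) := by
  classical
  obtain ⟨dp, hdp⟩ := exists_dual hp
  obtain ⟨dq, hdq⟩ := exists_dual hq
  obtain ⟨dw, hdw⟩ := exists_dual hw
  obtain ⟨dq', hdq'⟩ := exists_dual hq'
  obtain ⟨dw', hdw'⟩ := exists_dual hw'
  set c : Fin R → ℝ := fun j => mu j * dotR (p' j) (dp m) with hc
  have star : ∀ (g : β → ℝ) (h : γ → ℝ),
      lam m * (dotR (q m) g * dotR (w m) h) = ∑ j, c j * (dotR (q' j) g * dotR (w' j) h) := by
    intro g h
    have := hE (dp m) g h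
    rw [Finset.sum_eq_single m] at this
    · rw [hdp] at this
      simp only [if_true, eq_self_iff_true, one_mul] at this
      rw [this]
      exact Finset.sum_congr rfl fun j _ => by rw [hc]; ring
    · intro b _ hb
      rw [hdp]
      simp [Ne.symm hb]
    · intro h'; exact absurd (mem_univ m) h'
  -- existence of a nonzero coefficient
  have hex : ∃ j, c j ≠ 0 := by
    by_contra hno
    push_neg at hno
    have := star (dq m) (dw m)
    rw [hdq, hdw] at this
    simp only [if_true, eq_self_iff_true, mul_one, one_mul] at this
    rw [Finset.sum_eq_zero (fun j _ => by rw [hno j, zero_mul])] at this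
    exact hlam this
  obtain ⟨j1, hj1⟩ := hex
  refine ⟨j1, ?_⟩
  -- plug duals of the primed families
  have starH : ∀ g : β → ℝ,
      lam m * (dotR (q m) g * dotR (w m) (dw' j1)) = c j1 * dotR (q' j1) g := by
    intro g
    have := star g (dw' j1)
    rw [this, Finset.sum_eq_single j1]
    · rw [hdw']; simp
    · intro b _ hb
      rw [hdw']
      simp [Ne.symm hb]
    · intro h'; exact absurd (mem_univ j1) h'
  have starG : ∀ h : γ → ℝ,
      lam m * (dotR (q m) (dq' j1) * dotR (w m) h) = c j1 * dotR (w' j1) h := by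
    intro h
    have := star (dq' j1) h
    rw [this, Finset.sum_eq_single j1]
    · rw [hdq']; simp
    · intro b _ hb
      rw [hdq']
      simp [Ne.symm hb]
    · intro h'; exact absurd (mem_univ j1) h'
  have hkey : lam m * (dotR (q m) (dq' j1) * dotR (w m) (dw' j1)) = c j1 := by
    have := starH (dq' j1)
    rw [hdq'] at this
    simpa using this
  have hQnz : dotR (q m) (dq' j1) ≠ 0 := by
    intro h0
    rw [h0, zero_mul, mul_zero] at hkey
    exact hj1 hkey.symm
  have hWnz : dotR (w m) (dw' j1) ≠ 0 := by
    intro h0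
    rw [h0, mul_zero, mul_zero] at hkey
    exact hj1 hkey.symm
  refine ⟨lam m * dotR (w m) (dw' j1) / c j1, lam m * dotR (q m) (dq' j1) / c j1,
    div_ne_zero (mul_ne_zero hlam hWnz) hj1, div_ne_zero (mul_ne_zero hlam hQnz) hj1, ?_, ?_⟩
  · intro y
    have := starH (ebasis y)
    rw [dotR_ebasis, dotR_ebasis] at this
    field_simp
    rw [mul_comm (q' j1 y) (c j1), ← this]
    ring
  · intro z
    have := starG (ebasis z)
    rw [dotR_ebasis, dotR_ebasis] at this
    field_simp
    rw [mul_comm (w' j1 z) (c j1), ← this]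
    ring

end

section
variable {α β γ : Type*} [Fintype α] [Fintype β] [Fintype γ]

lemma core3 {R : ℕ} {lam mu : Fin R → ℝ} {p p' : Fin R → α → ℝ} {q q' : Fin R → β → ℝ}
    {w w' : Fin R → γ → ℝ}
    (hlam : ∀ j, lam j ≠ 0)
    (hp : LinearIndependent ℝ p) (hq : LinearIndependent ℝ q) (hw : LinearIndependent ℝ w)
    (hp' : LinearIndependent ℝ p') (hq' : LinearIndependent ℝ q')
    (hw' : LinearIndependent ℝ w')
    (hE : pairEq lam p q w mu p' q' w') :
    ∃ π : Equiv.Perm (Fin R), ∃ b1 b2 b3 : Fin R → ℝ,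
      (∀ j, b1 j ≠ 0) ∧ (∀ j, b2 j ≠ 0) ∧ (∀ j, b3 j ≠ 0) ∧
      (∀ j x, p' (π j) x = b1 j * p j x) ∧
      (∀ j y, q' (π j) y = b2 j * q j y) ∧
      (∀ j z, w' (π j) z = b3 j * w j z) ∧
      (∀ j, lam j = b1 j * b2 j * b3 j * mu (π j)) := by
  classical
  have FULL : ∀ m, ∃ j, ∃ b1 b2 b3 : ℝ, b1 ≠ 0 ∧ b2 ≠ 0 ∧ b3 ≠ 0 ∧
      (∀ x, p' j x = b1 * p m x) ∧ (∀ y, q' j y = b2 * q m y) ∧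
      (∀ z, w' j z = b3 * w m z) := by
    intro m
    obtain ⟨j, b2, b3, hb2, hb3, hq2, hw3⟩ := collapse hp hq hw hq' hw' hE m (hlam m)
    obtain ⟨j', b1, b3', hb1, hb3', hp1, hw3'⟩ :=
      collapse hq hp hw hp' hw' hE.swap12 m (hlam m)
    have : j' = j := li_unique_parallel hw' hb3' hb3 hw3' hw3
    subst this
    exact ⟨j', b1, b2, b3, hb1, hb2, hb3, hp1, hq2, hw3⟩
  choose πf b1 b2 b3 hb1 hb2 hb3 hpp hqq hww using FULL
  have hinj : Function.Injective πf := by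
    intro m m' hmm
    have h1 : ∀ y, q' (πf m) y = b2 m * q m y := hqq m
    have h2 : ∀ y, q' (πf m) y = b2 m' * q m' y := by rw [hmm]; exact hqq m'
    have e1 : ∀ y, q m y = (b2 m)⁻¹ * q' (πf m) y := by
      intro y; rw [h1 y, ← mul_assoc, inv_mul_cancel₀ (hb2 m), one_mul]
    have e2 : ∀ y, q m' y = (b2 m')⁻¹ * q' (πf m) y := by
      intro y; rw [h2 y, ← mul_assoc, inv_mul_cancel₀ (hb2 m'), one_mul]
    exact li_unique_parallel hq (inv_ne_zero (hb2 m)) (inv_ne_zero (hb2 m')) e1 e2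
  let π : Equiv.Perm (Fin R) := Equiv.ofBijective πf (Finite.injective_iff_bijective.mp hinj)
  refine ⟨π, b1, b2, b3, hb1, hb2, hb3, hpp, hqq, hww, ?_⟩
  intro m0
  obtain ⟨dp, hdp⟩ := exists_dual hp
  obtain ⟨dq, hdq⟩ := exists_dual hq
  obtain ⟨dw, hdw⟩ := exists_dual hw
  have := hE (dp m0) (dq m0) (dw m0)
  rw [Finset.sum_eq_single m0] at this
  · rw [hdp, hdq, hdw] at this
    simp only [if_true, eq_self_iff_true, one_mul, mul_one] at this
    rw [this]
    rw [← Equiv.sum_comp π (fun j => mu j * (dotR (p' j) (dp m0) *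
        (dotR (q' j) (dq m0) * dotR (w' j) (dw m0))))]
    have hterm : ∀ m, mu (π m) * (dotR (p' (π m)) (dp m0) *
        (dotR (q' (π m)) (dq m0) * dotR (w' (π m)) (dw m0))) =
        if m0 = m then b1 m * b2 m * b3 m * mu (π m) else 0 := by
      intro m
      have hP : dotR (p' (π m)) (dp m0) = b1 m * dotR (p m) (dp m0) := by
        unfold dotR; rw [Finset.mul_sum]
        exact Finset.sum_congr rfl fun t _ => by
          show p' (πf m) t * dp m0 t = b1 m * (p m t * dp m0 t)
          rw [hpp m t]; ring
      have hQ : dotR (q' (π m)) (dq m0) = b2 m * dotR (q m) (dq m0) := by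
        unfold dotR; rw [Finset.mul_sum]
        exact Finset.sum_congr rfl fun t _ => by
          show q' (πf m) t * dq m0 t = b2 m * (q m t * dq m0 t)
          rw [hqq m t]; ring
      have hW : dotR (w' (π m)) (dw m0) = b3 m * dotR (w m) (dw m0) := by
        unfold dotR; rw [Finset.mul_sum]
        exact Finset.sum_congr rfl fun t _ => by
          show w' (πf m) t * dw m0 t = b3 m * (w m t * dw m0 t)
          rw [hww m t]; ring
      rw [hP, hQ, hW, hdp, hdq, hdw]
      by_cases hm : m0 = m
      · simp only [if_pos hm]; ring
      · simp only [if_neg hm]; ring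
    rw [Finset.sum_congr rfl fun m _ => hterm m, Finset.sum_ite_eq]
    simp
  · intro b _ hb
    rw [hdp]
    simp [Ne.symm hb]
  · intro h'; exact absurd (mem_univ m0) h'

lemma mem_span_of_pairEq {R R2 : ℕ} {lam : Fin R → ℝ} {p : Fin R → α → ℝ}
    {q : Fin R → β → ℝ} {w : Fin R → γ → ℝ} {mu : Fin R2 → ℝ} {p' : Fin R2 → α → ℝ}
    {q' : Fin R2 → β → ℝ} {w' : Fin R2 → γ → ℝ}
    (hE : pairEq lam p q w mu p' q' w')
    (hq : LinearIndependent ℝ q) (hw : LinearIndependent ℝ w)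
    (j : Fin R) (hj : lam j ≠ 0) : p j ∈ Submodule.span ℝ (Set.range p') := by
  classical
  obtain ⟨dq, hdq⟩ := exists_dual hq
  obtain ⟨dw, hdw⟩ := exists_dual hw
  have key : ∀ x, lam j * p j x =
      ∑ j', mu j' * (p' j' x * (dotR (q' j') (dq j) * dotR (w' j') (dw j))) := by
    intro x
    have := hE (ebasis x) (dq j) (dw j)
    rw [Finset.sum_eq_single j] at this
    · rw [hdq, hdw, dotR_ebasis] at this
      simp only [if_true, eq_self_iff_true, one_mul, mul_one] at this
      rw [this]
      exact Finset.sum_congr rfl fun j' _ => by rw [dotR_ebasis]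
    · intro b _ hb
      rw [hdq]
      simp [Ne.symm hb]
    · intro h'; exact absurd (mem_univ j) h'
  have hfun : p j = ∑ j', ((lam j)⁻¹ * (mu j' * (dotR (q' j') (dq j) * dotR (w' j') (dw j)))) • p' j' := by
    funext x
    rw [Finset.sum_apply]
    have : p j x = (lam j)⁻¹ * (lam j * p j x) := by field_simp
    rw [this, key x, Finset.mul_sum]
    exact Finset.sum_congr rfl fun j' _ => by
      rw [Pi.smul_apply, smul_eq_mul]; ring
  rw [hfun]
  exact Submodule.sum_mem _ fun j' _ =>
    Submodule.smul_mem _ _ (Submodule.subset_span ⟨j', rfl⟩)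

lemma card_le_finrank_span {ι V : Type*} [Fintype ι] [AddCommGroup V] [Module ℝ V]
    {c : ι → V} (hc : LinearIndependent ℝ c) {s : Set V} (hs : s.Finite)
    (hmem : ∀ j, c j ∈ Submodule.span ℝ s) :
    Fintype.card ι ≤ s.finrank ℝ := by
  haveI : FiniteDimensional ℝ (Submodule.span ℝ s) := FiniteDimensional.span_of_finite ℝ hs
  have h2 : LinearIndependent ℝ (fun j => (⟨c j, hmem j⟩ : Submodule.span ℝ s)) := by
    apply LinearIndependent.of_comp (Submodule.span ℝ s).subtype
    exact hc
  exact h2.fintype_card_le_finrank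

end

lemma split_prod {ι : Type*} [Fintype ι] [DecidableEq ι] {δ : ι → Type*} [∀ i, Fintype (δ i)]
    {x y : ∀ i, δ i → ℝ} {c : ℝ} (hc : c ≠ 0)
    (hx : ∀ i, ∃ t, x i t ≠ 0)
    (H : ∀ z : ∀ i, δ i, (∏ i, y i (z i)) = c * ∏ i, x i (z i)) :
    ∃ al : ι → ℝ, (∀ i, al i ≠ 0) ∧ (∀ i t, y i t = al i * x i t) ∧ (∏ i, al i) = c := by
  classical
  choose zs hzs using hx
  have hX : (∏ i, x i (zs i)) ≠ 0 := Finset.prod_ne_zero_iff.mpr fun i _ => hzs i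
  have hY : (∏ i, y i (zs i)) ≠ 0 := by rw [H zs]; exact mul_ne_zero hc hX
  have hYi : ∀ i, y i (zs i) ≠ 0 := fun i => by
    intro h0
    exact hY (Finset.prod_eq_zero (Finset.mem_univ i) h0)
  have key : ∀ i t, y i t * ∏ l ∈ Finset.univ.erase i, y l (zs l) =
      c * (x i t * ∏ l ∈ Finset.univ.erase i, x l (zs l)) := by
    intro i t
    have := H (Function.update zs i t)
    rw [← Finset.mul_prod_erase Finset.univ _ (Finset.mem_univ i),
        ← Finset.mul_prod_erase Finset.univ (fun l => x l (Function.update zs i t l))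
          (Finset.mem_univ i)] at this
    rw [Function.update_self] at this
    have hrest : ∀ (v : ∀ i, δ i → ℝ), ∏ l ∈ Finset.univ.erase i, v l (Function.update zs i t l)
        = ∏ l ∈ Finset.univ.erase i, v l (zs l) := by
      intro v
      refine Finset.prod_congr rfl fun l hl => ?_
      rw [Function.update_of_ne (Finset.ne_of_mem_erase hl)]
    rw [hrest, hrest] at this
    exact this
  have hYe : ∀ i, (∏ l ∈ Finset.univ.erase i, y l (zs l)) ≠ 0 := fun i =>
    Finset.prod_ne_zero_iff.mpr fun l _ => hYi l
  refine ⟨fun i => y i (zs i) / x i (zs i), fun i => div_ne_zero (hYi i) (hzs i), ?_, ?_⟩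
  · intro i t
    have h1 := key i t
    have h2 := key i (zs i)
    -- y i t = (c * Xi / Yi) * x i t  and  y i (zs i) = (c * Xi / Yi) * x i (zs i)
    set Yi := ∏ l ∈ Finset.univ.erase i, y l (zs l)
    set Xi := ∏ l ∈ Finset.univ.erase i, x l (zs l)
    have e1 : y i t = c * Xi / Yi * x i t := by
      rw [div_mul_eq_mul_div, eq_div_iff (hYe i), h1]; ring
    have e2 : y i (zs i) = c * Xi / Yi * x i (zs i) := by
      rw [div_mul_eq_mul_div, eq_div_iff (hYe i), h2]; ring
    have e3 : y i (zs i) / x i (zs i) = c * Xi / Yi := by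
      rw [e2]; exact mul_div_cancel_right₀ _ (hzs i)
    show y i t = y i (zs i) / x i (zs i) * x i t
    rw [e3]; exact e1
  · have : ∀ i, y i (zs i) / x i (zs i) * x i (zs i) = y i (zs i) := fun i =>
      div_mul_cancel₀ _ (hzs i)
    have hprod : (∏ i, y i (zs i) / x i (zs i)) * ∏ i, x i (zs i) = ∏ i, y i (zs i) := by
      rw [← Finset.prod_mul_distrib]
      exact Finset.prod_congr rfl fun i _ => this i
    rw [H zs] at hprod
    exact mul_right_cancel₀ hX hprod

section Merged
open Finset

variable {k : ℕ} {n : Fin k → ℕ}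

abbrev RT (i0 i1 : Fin k) : Type := {i : Fin k // ¬ i = i0 ∧ ¬ i = i1}

def Mw {r : ℕ} (i0 i1 : Fin k) (u : Fac n r) (j : Fin r) :
    ((i : RT i0 i1) → Fin (n i.1)) → ℝ :=
  fun z => ∏ i, u i.1 j (z i)

lemma prod_split_k (i0 i1 : Fin k) (h10 : ¬ i1 = i0) (f : Fin k → ℝ) :
    ∏ i, f i = f i0 * (f i1 * ∏ i : RT i0 i1, f i.1) := by
  classical
  rw [← Finset.mul_prod_erase univ f (mem_univ i0)]
  congr 1
  rw [← Finset.mul_prod_erase (univ.erase i0) f (by rw [mem_erase]; exact ⟨h10, mem_univ _⟩)]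
  congr 1
  refine Finset.prod_subtype _ (fun x => ?_) f
  simp only [mem_erase, mem_univ, and_true]
  constructor
  · rintro ⟨h1, h0⟩; exact ⟨h0, h1⟩
  · rintro ⟨h0, h1⟩; exact ⟨h1, h0⟩

def idxOf (i0 i1 : Fin k) (x : Fin (n i0)) (y : Fin (n i1))
    (z : (i : RT i0 i1) → Fin (n i.1)) : Idx n := fun i =>
  if h : i = i0 then cast (by rw [h]) x
  else if h' : i = i1 then cast (by rw [h']) y
  else z ⟨i, h, h'⟩

lemma idxOf_0 (i0 i1 : Fin k) (x : Fin (n i0)) (y : Fin (n i1))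
    (z : (i : RT i0 i1) → Fin (n i.1)) : idxOf i0 i1 x y z i0 = x := by
  unfold idxOf
  rw [dif_pos rfl]
  exact cast_eq _ x

lemma idxOf_1 (i0 i1 : Fin k) (h10 : ¬ i1 = i0) (x : Fin (n i0)) (y : Fin (n i1))
    (z : (i : RT i0 i1) → Fin (n i.1)) : idxOf i0 i1 x y z i1 = y := by
  unfold idxOf
  rw [dif_neg h10, dif_pos rfl]
  exact cast_eq _ y

lemma idxOf_rest (i0 i1 : Fin k) (x : Fin (n i0)) (y : Fin (n i1))
    (z : (i : RT i0 i1) → Fin (n i.1)) (i : RT i0 i1) :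
    idxOf i0 i1 x y z i.1 = z i := by
  unfold idxOf
  rw [dif_neg i.2.1, dif_neg i.2.2]

lemma decomp_merged {r : ℕ} (i0 i1 : Fin k) (h10 : ¬ i1 = i0) (σ : Fin r → ℝ) (u : Fac n r)
    (x : Fin (n i0)) (y : Fin (n i1)) (z : (i : RT i0 i1) → Fin (n i.1)) :
    decomp σ u (idxOf i0 i1 x y z) = T3 σ (u i0) (u i1) (Mw i0 i1 u) (x, y, z) := by
  unfold decomp T3 Mw
  refine Finset.sum_congr rfl fun j _ => ?_
  congr 1
  rw [prod_split_k i0 i1 h10 (fun i => u i j (idxOf i0 i1 x y z i))]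
  congr 1
  · rw [idxOf_0]
  congr 1
  · rw [idxOf_1 i0 i1 h10]
  · exact Finset.prod_congr rfl fun i _ => by rw [idxOf_rest]

lemma fold_decomp {r' : ℕ} (i0 : Fin k) (σ : Fin r' → ℝ) (u : Fac n r') :
    decomp σ u = fun idx => ∑ j, ∏ i, ((if i = i0 then σ j else 1) * u i j (idx i)) := by
  classical
  funext idx
  unfold decomp
  refine Finset.sum_congr rfl fun j _ => ?_
  rw [Finset.prod_mul_distrib, Finset.prod_ite_eq' Finset.univ i0 (fun _ => σ j)]
  simp

lemma trank_le_decomp {r' : ℕ} (i0 : Fin k) {A : Tensor n} (σ : Fin r' → ℝ) (u : Fac n r')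
    (hA : A = decomp σ u) : trank A ≤ r' := by
  classical
  apply Nat.sInf_le
  exact ⟨fun j i t => (if i = i0 then σ j else 1) * u i j t, by rw [hA, fold_decomp i0]⟩

lemma exists_raw (i0 : Fin k) {A : Tensor n} {r' : ℕ} (σ : Fin r' → ℝ) (u : Fac n r')
    (hA : A = decomp σ u) :
    ∃ b : Fin (trank A) → (i : Fin k) → Fin (n i) → ℝ,
      A = fun idx => ∑ j, ∏ i, b j i (idx i) := by
  classical
  have hne : {m : ℕ | ∃ b : Fin m → (i : Fin k) → Fin (n i) → ℝ,
      A = fun idx => ∑ j, ∏ i, b j i (idx i)}.Nonempty :=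
    ⟨r', fun j i t => (if i = i0 then σ j else 1) * u i j t, by rw [hA, fold_decomp i0]⟩
  exact Nat.sInf_mem hne

lemma trank_lt_zero_coeff (i0 : Fin k) {R : ℕ} {A : Tensor n} (lam : Fin R → ℝ)
    (u : Fac n R) (j0 : Fin R) (hz : lam j0 = 0) (hA : A = decomp lam u) :
    trank A < R := by
  have hpos := j0.pos
  obtain ⟨R', rfl⟩ : ∃ R', R = R' + 1 := ⟨R - 1, by omega⟩
  refine lt_of_le_of_lt (trank_le_decomp i0 (fun l => lam (j0.succAbove l))
    (fun i l => u i (j0.succAbove l)) ?_) (Nat.lt_succ_self R')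
  rw [hA]
  funext idx
  unfold decomp
  rw [Fin.sum_univ_succAbove (fun j => lam j * ∏ i, u i j (idx i)) j0, hz, zero_mul, zero_add]

lemma unit_exists_ne {m r : ℕ} {U : Fin r → Fin m → ℝ} (h : unitCols U) (j : Fin r) :
    ∃ t, U j t ≠ 0 := by
  by_contra hc
  push_neg at hc
  have := h j
  rw [Finset.sum_eq_zero (fun t _ => by rw [hc t]; ring)] at this
  norm_num at this

lemma ortho_li {m R : ℕ} {U : Fin R → Fin m → ℝ} (h : orthoCols U) :
    LinearIndependent ℝ U := by
  classical
  rw [Fintype.linearIndependent_iff]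
  intro g hg j
  have h0 : ∀ t, (∑ j', g j' * U j' t) = 0 := by
    intro t
    have := congrFun hg t
    rw [Finset.sum_apply] at this
    simpa using this
  have e1 : ∑ t, (∑ j', g j' * U j' t) * U j t = 0 :=
    Finset.sum_eq_zero fun t _ => by rw [h0 t, zero_mul]
  have e2 : ∑ t, (∑ j', g j' * U j' t) * U j t = g j := by
    calc ∑ t, (∑ j', g j' * U j' t) * U j t
        = ∑ t, ∑ j', g j' * (U j' t * U j t) := by
          refine Finset.sum_congr rfl fun t _ => ?_
          rw [Finset.sum_mul]
          exact Finset.sum_congr rfl fun j' _ => by ring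
      _ = ∑ j', ∑ t, g j' * (U j' t * U j t) := Finset.sum_comm
      _ = ∑ j', g j' * ∑ t, U j' t * U j t := by
          refine Finset.sum_congr rfl fun j' _ => ?_
          rw [Finset.mul_sum]
      _ = ∑ j', g j' * (if j' = j then 1 else 0) := by
          refine Finset.sum_congr rfl fun j' _ => ?_
          rw [h j' j]
      _ = g j := by simp [mul_ite, Finset.sum_ite_eq']
  rw [e1] at e2
  exact e2.symm

lemma mergedLI {r' : ℕ} {ι : Type*} [Fintype ι] (i0 i1 i2 : Fin k)
    (h20 : ¬ i2 = i0) (h21 : ¬ i2 = i1) {u : Fac n r'} (c : ι → Fin r')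
    (h2 : LinearIndependent ℝ (fun j => u i2 (c j)))
    (hnz : ∀ (i : RT i0 i1) (j : ι), ∃ t, u i.1 (c j) t ≠ 0) :
    LinearIndependent ℝ (fun j => Mw i0 i1 u (c j)) := by
  classical
  rw [Fintype.linearIndependent_iff]
  intro g hg j0
  choose ts hts using fun i : RT i0 i1 => hnz i j0
  set i2' : RT i0 i1 := ⟨i2, h20, h21⟩ with hi2'
  set K : ι → ℝ := fun j => ∏ i ∈ Finset.univ.erase i2', u i.1 (c j) (ts i) with hK
  have key : ∀ t : Fin (n i2), ∑ j, (g j * K j) * u i2 (c j) t = 0 := by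
    intro t
    have hgz := congrFun hg (Function.update ts i2' t)
    simp only [Finset.sum_apply, Pi.smul_apply, smul_eq_mul, Pi.zero_apply] at hgz
    rw [← hgz]
    refine Finset.sum_congr rfl fun j _ => ?_
    unfold Mw
    rw [← Finset.mul_prod_erase Finset.univ _ (Finset.mem_univ i2'), Function.update_self]
    have hrest : ∏ i ∈ Finset.univ.erase i2', u i.1 (c j) (Function.update ts i2' t i) = K j := by
      refine Finset.prod_congr rfl fun l hl => ?_
      rw [Function.update_of_ne (Finset.ne_of_mem_erase hl)]
    rw [hrest]
    ring
  have hvec : ∑ j, (g j * K j) • (fun t => u i2 (c j) t) = (0 : Fin (n i2) → ℝ) := by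
    funext t
    simp only [Finset.sum_apply, Pi.smul_apply, smul_eq_mul, Pi.zero_apply]
    exact key t
  have := Fintype.linearIndependent_iff.mp h2 (fun j => g j * K j) hvec j0
  have hKnz : K j0 ≠ 0 := Finset.prod_ne_zero_iff.mpr fun i _ => hts i
  exact (mul_eq_zero.mp this).resolve_right hKnz

end Merged

section Main
open Finset

variable {k : ℕ} {n : Fin k → ℕ}

theorem main_ident {r : ℕ} (i0 i1 i2 : Fin k)
    (h10 : ¬ i1 = i0) (h20 : ¬ i2 = i0) (h21 : ¬ i2 = i1)
    {A : Tensor n} (σ : Fin r → ℝ) (a : Fac n r)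
    (hunit : ∀ i, unitCols (a i))
    (hli0 : LinearIndependent ℝ (a i0)) (hli1 : LinearIndependent ℝ (a i1))
    (hli2 : LinearIndependent ℝ (a i2))
    (hA : A = decomp σ a) : Identifiable A := by
  classical
  intro R hR lam mu u v huU hvU hAu hAv
  subst hR
  -- merged reshapes
  have hMof : ∀ (r' : ℕ) (τ : Fin r' → ℝ) (b : Fac n r'), A = decomp τ b →
      (fun t : Fin (n i0) × Fin (n i1) × ((i : RT i0 i1) → Fin (n i.1)) =>
        A (idxOf i0 i1 t.1 t.2.1 t.2.2)) = T3 τ (b i0) (b i1) (Mw i0 i1 b) := by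
    intro r' τ b hb
    funext t
    obtain ⟨x, y, z⟩ := t
    show A (idxOf i0 i1 x y z) = _
    rw [hb]
    exact decomp_merged i0 i1 h10 τ b x y z
  have hMa := hMof r σ a hA
  have hMu := hMof _ lam u hAu
  have hMv := hMof _ mu v hAv
  -- support of σ
  set S := {j : Fin r // σ j ≠ 0} with hSdef
  -- restricted decomposition : trank A ≤ card S
  have hrestr : A = decomp (fun j : Fin (Fintype.card S) => σ ((Fintype.equivFin S).symm j).1)
      (fun i j => a i ((Fintype.equivFin S).symm j).1) := by
    rw [hA]
    funext idx
    unfold decomp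
    have h1 : ∑ j : Fin r, σ j * ∏ i, a i j (idx i)
        = ∑ j : S, σ j.1 * ∏ i, a i j.1 (idx i) := by
      rw [← Finset.sum_filter_add_sum_filter_not Finset.univ (fun j => σ j ≠ 0)
        (fun j => σ j * ∏ i, a i j (idx i))]
      have h2 : ∑ j ∈ Finset.univ.filter (fun j => ¬ σ j ≠ 0),
          σ j * ∏ i, a i j (idx i) = 0 :=
        Finset.sum_eq_zero fun j hj => by
          rw [Finset.mem_filter] at hj
          rw [not_not.mp hj.2, zero_mul]
      rw [h2, add_zero]
      exact Finset.sum_subtype _ (fun j => by simp) _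
    rw [h1, ← Equiv.sum_comp (Fintype.equivFin S).symm
      (fun j : S => σ j.1 * ∏ i, a i j.1 (idx i))]
  have htr_le : trank A ≤ Fintype.card S := trank_le_decomp i0 _ _ hrestr
  -- raw decomposition of size trank A
  obtain ⟨braw, hbraw⟩ := exists_raw i0 σ a hA
  have huraw : A = decomp (fun _ => (1:ℝ)) (fun i j => braw j i) := by
    funext idx
    rw [congrFun hbraw idx]
    unfold decomp
    simp
  have hMraw := hMof _ (fun _ => (1:ℝ)) (fun i j => braw j i) huraw
  -- pair equalities
  have Eraw : pairEq σ (a i0) (a i1) (Mw i0 i1 a) (fun _ => (1:ℝ))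
      ((fun i j => braw j i) i0) ((fun i j => braw j i) i1)
      (Mw i0 i1 (fun i j => braw j i)) := pairEq_of_eq (hMa.symm.trans hMraw)
  have Eau : pairEq σ (a i0) (a i1) (Mw i0 i1 a) lam (u i0) (u i1) (Mw i0 i1 u) :=
    pairEq_of_eq (hMa.symm.trans hMu)
  have Eav : pairEq σ (a i0) (a i1) (Mw i0 i1 a) mu (v i0) (v i1) (Mw i0 i1 v) :=
    pairEq_of_eq (hMa.symm.trans hMv)
  have Euv : pairEq lam (u i0) (u i1) (Mw i0 i1 u) mu (v i0) (v i1) (Mw i0 i1 v) :=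
    pairEq_of_eq (hMu.symm.trans hMv)
  -- linear independence facts about a
  have hanz : ∀ (i : RT i0 i1) (j : Fin r), ∃ t, a i.1 j t ≠ 0 :=
    fun i j => unit_exists_ne (hunit i.1) j
  have hMwa : LinearIndependent ℝ (Mw i0 i1 a) := by
    have := mergedLI i0 i1 i2 h20 h21 (fun j : Fin r => j) hli2 hanz
    exact this
  have liS0 : LinearIndependent ℝ (fun j : S => a i0 j.1) :=
    hli0.comp Subtype.val Subtype.val_injective
  have liS1 : LinearIndependent ℝ (fun j : S => a i1 j.1) :=
    hli1.comp Subtype.val Subtype.val_injective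
  have liSMw : LinearIndependent ℝ (fun j : S => Mw i0 i1 a j.1) := by
    have := mergedLI i0 i1 i2 h20 h21 (Subtype.val : S → Fin r)
      (hli2.comp Subtype.val Subtype.val_injective) (fun i j => hanz i j.1)
    exact this
  -- card S ≥ trank A
  have hm_le : Fintype.card S ≤ trank A := by
    have hmem : ∀ j : S, a i0 j.1 ∈ Submodule.span ℝ
        (Set.range ((fun i j => braw j i) i0)) :=
      fun j => mem_span_of_pairEq Eraw hli1 hMwa j.1 j.2
    have h1 := card_le_finrank_span liS0 (Set.finite_range _) hmem
    have h2 := finrank_range_le_card (R := ℝ) ((fun (i : Fin k) (j : Fin (trank A)) => braw j i) i0)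
    simpa using le_trans h1 h2
  have hcard : Fintype.card S = trank A := le_antisymm hm_le htr_le
  -- all six linear independence facts
  have DER : ∀ (w : Fac n (trank A)) (τ : Fin (trank A) → ℝ),
      pairEq σ (a i0) (a i1) (Mw i0 i1 a) τ (w i0) (w i1) (Mw i0 i1 w) →
      LinearIndependent ℝ (w i0) ∧ LinearIndependent ℝ (w i1) ∧
        LinearIndependent ℝ (Mw i0 i1 w) := by
    intro w τ E
    have c0 : ∀ j : S, a i0 j.1 ∈ Submodule.span ℝ (Set.range (w i0)) :=
      fun j => mem_span_of_pairEq E hli1 hMwa j.1 j.2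
    have c1 : ∀ j : S, a i1 j.1 ∈ Submodule.span ℝ (Set.range (w i1)) :=
      fun j => mem_span_of_pairEq E.swap12 hli0 hMwa j.1 j.2
    have c2 : ∀ j : S, Mw i0 i1 a j.1 ∈ Submodule.span ℝ (Set.range (Mw i0 i1 w)) :=
      fun j => mem_span_of_pairEq E.swap13 hli1 hli0 j.1 j.2
    refine ⟨?_, ?_, ?_⟩
    · refine linearIndependent_iff_card_le_finrank_span.mpr ?_
      calc Fintype.card (Fin (trank A)) = Fintype.card S := by
            rw [Fintype.card_fin, hcard]
        _ ≤ (Set.range (w i0)).finrank ℝ :=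
            card_le_finrank_span liS0 (Set.finite_range _) c0
    · refine linearIndependent_iff_card_le_finrank_span.mpr ?_
      calc Fintype.card (Fin (trank A)) = Fintype.card S := by
            rw [Fintype.card_fin, hcard]
        _ ≤ (Set.range (w i1)).finrank ℝ :=
            card_le_finrank_span liS1 (Set.finite_range _) c1
    · refine linearIndependent_iff_card_le_finrank_span.mpr ?_
      calc Fintype.card (Fin (trank A)) = Fintype.card S := by
            rw [Fintype.card_fin, hcard]
        _ ≤ (Set.range (Mw i0 i1 w)).finrank ℝ :=
            card_le_finrank_span liSMw (Set.finite_range _) c2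
  obtain ⟨hu0, hu1, huM⟩ := DER u lam Eau
  obtain ⟨hv0, hv1, hvM⟩ := DER v mu Eav
  -- nonzero coefficients
  have hlamnz : ∀ j, lam j ≠ 0 := fun j0 hz =>
    absurd (trank_lt_zero_coeff i0 lam u j0 hz hAu) (lt_irrefl _)
  -- core matching
  obtain ⟨π, b1, b2, b3, hb1, hb2, hb3, hp', hq', hw', hco⟩ :=
    core3 hlamnz hu0 hu1 huM hv0 hv1 hvM Euv
  -- split the merged proportionality
  have hsplit : ∀ j, ∃ al : RT i0 i1 → ℝ, (∀ i, al i ≠ 0) ∧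
      (∀ i t, v i.1 (π j) t = al i * u i.1 j t) ∧ (∏ i, al i) = b3 j := by
    intro j
    refine split_prod (hb3 j) (fun i => unit_exists_ne (huU i.1) j) ?_
    intro z
    exact hw' j z
  choose alf halnz halprop halprod using hsplit
  refine ⟨π, fun i j => if h : i = i0 then b1 j else if h' : i = i1 then b2 j
    else alf j ⟨i, h, h'⟩, ?_, ?_, ?_⟩
  · intro i j
    show (if h : i = i0 then b1 j else if h' : i = i1 then b2 j else alf j ⟨i, h, h'⟩) ≠ 0
    by_cases h : i = i0
    · rw [dif_pos h]; exact hb1 j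
    · rw [dif_neg h]
      by_cases h' : i = i1
      · rw [dif_pos h']; exact hb2 j
      · rw [dif_neg h']; exact halnz j ⟨i, h, h'⟩
  · intro i j t
    show v i (π j) t =
      (if h : i = i0 then b1 j else if h' : i = i1 then b2 j else alf j ⟨i, h, h'⟩) * u i j t
    by_cases h : i = i0
    · subst h; rw [dif_pos rfl]; exact hp' j t
    · by_cases h' : i = i1
      · subst h'; rw [dif_neg h, dif_pos rfl]; exact hq' j t
      · rw [dif_neg h, dif_neg h']; exact halprop j ⟨i, h, h'⟩ t
  · intro j
    show (∏ i, (if h : i = i0 then b1 j else if h' : i = i1 then b2 j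
      else alf j ⟨i, h, h'⟩)) * mu (π j) = lam j
    rw [prod_split_k i0 i1 h10 (fun i => if h : i = i0 then b1 j
      else if h' : i = i1 then b2 j else alf j ⟨i, h, h'⟩)]
    rw [dif_pos rfl, dif_neg h10, dif_pos rfl]
    have hrt : (∏ i : RT i0 i1, (if h : i.1 = i0 then b1 j else if h' : i.1 = i1 then b2 j
        else alf j ⟨i.1, h, h'⟩)) = ∏ i : RT i0 i1, alf j i := by
      refine Finset.prod_congr rfl fun i _ => ?_
      rw [dif_neg i.2.1, dif_neg i.2.2]
    rw [hrt, halprod j, hco j]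
    ring

end Main

end Work

/-- Proposition: Identifiability.
If a tensor `A ∈ P_s(n,r)` (with `k ≥ 3`, `k > s ≥ 1`, `r ≤ min{n_1,…,n_s}`) has a partially
orthogonal decomposition whose factor matrices `A^{(s+1)}, …, A^{(k)}` all have full column
rank `r`, then `A` is identifiable.  Moreover, if `s ≥ 3`, every tensor in `P_s(n,r)` is
identifiable. -/
theorem identifiable_of_partially_orthogonal
    (k s r : ℕ) (n : Fin k → ℕ) (hk : 3 ≤ k) (hs1 : 1 ≤ s) (hsk : s < k)
    (hr : ∀ i : Fin k, (i : ℕ) < s → r ≤ n i) :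
    (∀ (A : Tensor n) (σ : Fin r → ℝ) (a : Fac n r),
      (∀ i, unitCols (a i)) →
      (∀ i : Fin k, (i : ℕ) < s → orthoCols (a i)) →
      (∀ i : Fin k, s ≤ (i : ℕ) → LinearIndependent ℝ (a i)) →
      A = decomp σ a → Identifiable A) ∧
    (3 ≤ s → ∀ A : Tensor n, memP s r A → Identifiable A) := by
  have hi10 : ¬ (⟨1, by omega⟩ : Fin k) = ⟨0, by omega⟩ := by
    intro h; simpa using congrArg Fin.val h
  have hi20 : ¬ (⟨2, by omega⟩ : Fin k) = ⟨0, by omega⟩ := by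
    intro h; simpa using congrArg Fin.val h
  have hi21 : ¬ (⟨2, by omega⟩ : Fin k) = ⟨1, by omega⟩ := by
    intro h; simpa using congrArg Fin.val h
  constructor
  · intro A σ a hu ho hli hA
    have hall : ∀ i : Fin k, LinearIndependent ℝ (a i) := by
      intro i
      by_cases h : (i : ℕ) < s
      · exact ortho_li (ho i h)
      · exact hli i (le_of_not_gt h)
    exact main_ident ⟨0, by omega⟩ ⟨1, by omega⟩ ⟨2, by omega⟩ hi10 hi20 hi21
      σ a hu (hall _) (hall _) (hall _) hA
  · intro hs3 A hmem
    obtain ⟨σ, a, hu, ho, hA⟩ := hmem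
    exact main_ident ⟨0, by omega⟩ ⟨1, by omega⟩ ⟨2, by omega⟩ hi10 hi20 hi21
      σ a hu (ortho_li (ho _ (by simpa using by omega)))
      (ortho_li (ho _ (by simpa using by omega)))
      (ortho_li (ho _ (by simpa using by omega))) hA

end POT
end

section
/- Let k ≥ 3 and s ≥ 2. If a tensor A ∈ P_s(n,r) has a decomposition A = Σ_{i=1}^r σ_i a_i^{(1)}⊗⋯⊗a_i^{(k)} with unit-norm columns in every factor matrix and orthonormal factor matrices A^{(1)},…,A^{(s)}, then rank(A) equals the number of indices i with σ_i ≠ 0; in particular, a partially orthogonal rank decomposition of A is a rank decomposition. -/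
open scoped BigOperators

namespace POT

variable {k : ℕ}

/-- Auxiliary: a sum over the whole index grid of a product over all modes
except `i₀` factorizes, picking up a factor `n i₀` from the free mode. -/
private lemma sum_prod_erase {k : ℕ} {n : Fin k → ℕ} (i₀ : Fin k)
    (f : (i : Fin k) → Fin (n i) → ℝ) :
    ∑ e : Idx n, ∏ i ∈ Finset.univ.erase i₀, f i (e i)
      = (n i₀ : ℝ) * ∏ i ∈ Finset.univ.erase i₀, ∑ t, f i t := by
  classical
  have h1 : ∀ e : Idx n, (∏ i ∈ Finset.univ.erase i₀, f i (e i))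
      = ∏ i, (if i = i₀ then (1:ℝ) else f i (e i)) := by
    intro e
    rw [← Finset.mul_prod_erase Finset.univ
      (fun i => if i = i₀ then (1:ℝ) else f i (e i)) (Finset.mem_univ i₀),
      if_pos rfl, one_mul]
    exact Finset.prod_congr rfl fun i hi => (if_neg (Finset.ne_of_mem_erase hi)).symm
  simp_rw [h1]
  have h2 : ∑ e : Idx n, ∏ i, (if i = i₀ then (1:ℝ) else f i (e i))
      = ∏ i, ∑ t, (if i = i₀ then (1:ℝ) else f i t) := by
    rw [Finset.prod_univ_sum (fun i => (Finset.univ : Finset (Fin (n i))))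
      (fun i t => if i = i₀ then (1:ℝ) else f i t), Fintype.piFinset_univ]
  rw [h2, ← Finset.mul_prod_erase Finset.univ
    (fun i => ∑ t, if i = i₀ then (1:ℝ) else f i t) (Finset.mem_univ i₀)]
  congr 1
  · simp
  · exact Finset.prod_congr rfl fun i hi => by
      exact Finset.sum_congr rfl fun t _ => if_neg (Finset.ne_of_mem_erase hi)

/-- Proposition: Rank.
For `k ≥ 3` and `s ≥ 2`, if `A ∈ P_s(n,r)` has a partially orthogonal decomposition
`A = ∑ σ_i a_i^{(1)} ⊗ ⋯ ⊗ a_i^{(k)}`, then `rank A` equals the number of nonzero `σ_i`;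
in particular, a partially orthogonal rank decomposition of `A` is a rank decomposition. -/
theorem rank_eq_card_nonzero_coeffs
    (k s r : ℕ) (n : Fin k → ℕ) (hk : 3 ≤ k) (hs : 2 ≤ s) (hsk : s ≤ k)
    (hr : ∀ i : Fin k, (i : ℕ) < s → r ≤ n i)
    (A : Tensor n) (σ : Fin r → ℝ) (a : Fac n r)
    (hu : ∀ i, unitCols (a i))
    (ho : ∀ i : Fin k, (i : ℕ) < s → orthoCols (a i))
    (hA : A = decomp σ a) :
    trank A = (Finset.univ.filter fun j => σ j ≠ 0).card ∧
    ((∀ r' : ℕ, r' < r → ¬ memP s r' A) → trank A = r) := by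
  classical
  have h0k : 0 < k := by omega
  have h1k : 1 < k := by omega
  set i₀ : Fin k := ⟨0, h0k⟩ with hi₀
  set i₁ : Fin k := ⟨1, h1k⟩ with hi₁
  have hi01 : i₁ ≠ i₀ := by simp [hi₀, hi₁, Fin.ext_iff]
  have hi₀s : (i₀ : ℕ) < s := by simp [hi₀]; omega
  have hi₁s : (i₁ : ℕ) < s := by simp [hi₁]; omega
  have hoa0 : orthoCols (a i₀) := ho i₀ hi₀s
  have hoa1 : orthoCols (a i₁) := ho i₁ hi₁s
  set F : Finset (Fin r) := Finset.univ.filter (fun j => σ j ≠ 0) with hF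
  set m : ℕ := F.card with hmdef
  let e : Fin m ≃ {x // x ∈ F} := F.equivFin.symm
  -- the tensor equals the decomposition restricted to nonzero coefficients
  have hAm : A = decomp (fun j : Fin m => σ (e j)) (fun i j t => a i (e j) t) := by
    funext idx
    rw [hA]
    simp only [decomp]
    have h1 : ∑ j, σ j * ∏ i, a i j (idx i) = ∑ j ∈ F, σ j * ∏ i, a i j (idx i) := by
      rw [hF]
      exact (Finset.sum_filter_of_ne (s := Finset.univ)
        (f := fun j => σ j * ∏ i, a i j (idx i)) (p := fun j => σ j ≠ 0)
        (fun x _ hx h0 => hx (by show σ x * _ = 0; rw [h0, zero_mul]))).symm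
    have h2 : ∑ j ∈ F, σ j * ∏ i, a i j (idx i)
        = ∑ j : Fin m, σ (e j) * ∏ i, a i (e j) (idx i) := by
      rw [← Finset.sum_attach F (fun j => σ j * ∏ i, a i j (idx i)),
        ← Finset.univ_eq_attach]
      exact (Equiv.sum_comp e
        (fun x : {x // x ∈ F} => σ (x : Fin r) * ∏ i, a i (x : Fin r) (idx i))).symm
    rw [h1, h2]
  -- upper bound: a decomposition with `m` rank-one terms
  have hmem : m ∈ {m' : ℕ | ∃ b : Fin m' → (i : Fin k) → Fin (n i) → ℝ,
      A = fun idx => ∑ j, ∏ i, b j i (idx i)} := by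
    refine ⟨fun j i t => (if i = i₀ then σ (e j) else 1) * a i (e j) t, ?_⟩
    rw [hAm]
    funext idx
    simp only [decomp]
    refine Finset.sum_congr rfl fun j _ => ?_
    rw [Finset.prod_mul_distrib, Finset.prod_ite_eq' Finset.univ i₀
      (fun _ => σ (e j)), if_pos (Finset.mem_univ i₀)]
  -- the orthogonal complement vectors
  set v : Fin r → Idx n → ℝ := fun j ee => ∏ i ∈ Finset.univ.erase i₀, a i j (ee i) with hv
  have hgram : ∀ j j' : Fin r,
      (∑ ee : Idx n, v j ee * v j' ee) = (n i₀ : ℝ) * (if j = j' then 1 else 0) := by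
    intro j j'
    have h1 : ∀ ee : Idx n, v j ee * v j' ee
        = ∏ i ∈ Finset.univ.erase i₀, (a i j (ee i) * a i j' (ee i)) := by
      intro ee; rw [hv]; exact (Finset.prod_mul_distrib).symm
    simp_rw [h1]
    rw [sum_prod_erase i₀ (fun i t => a i j t * a i j' t)]
    congr 1
    by_cases hjj : j = j'
    · subst hjj
      rw [if_pos rfl]
      exact Finset.prod_eq_one fun i _ => hu i j
    · rw [if_neg hjj]
      refine Finset.prod_eq_zero (Finset.mem_erase.mpr ⟨hi01, Finset.mem_univ i₁⟩) ?_
      rw [hoa1 j j', if_neg hjj]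
  -- lower bound: any decomposition has at least `m` terms
  have hlb : ∀ m' ∈ {m' : ℕ | ∃ b : Fin m' → (i : Fin k) → Fin (n i) → ℝ,
      A = fun idx => ∑ j, ∏ i, b j i (idx i)}, m ≤ m' := by
    rintro m' ⟨b, hb⟩
    by_cases hm0 : m = 0
    · omega
    have hFne : F.Nonempty := Finset.card_pos.mp (by omega)
    have hrpos : 0 < r := hFne.choose.pos
    have hn0 : (0 : ℝ) < (n i₀ : ℝ) := by
      have := hr i₀ hi₀s
      exact_mod_cast by omega
    -- the mode-i₀ unfolding
    set M : Matrix (Idx n) (Fin (n i₀)) ℝ :=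
      fun ee t => A (Function.update ee i₀ t) with hM
    -- factorization of entries through the alternative decomposition
    have hupd : ∀ (c : (i : Fin k) → Fin (n i) → ℝ) (ee : Idx n) (t : Fin (n i₀)),
        (∏ i, c i (Function.update ee i₀ t i))
          = c i₀ t * ∏ i ∈ Finset.univ.erase i₀, c i (ee i) := by
      intro c ee t
      rw [← Finset.mul_prod_erase Finset.univ (fun i => c i (Function.update ee i₀ t i))
        (Finset.mem_univ i₀), Function.update_self]
      congr 1
      exact Finset.prod_congr rfl fun i hi => by
        rw [Function.update_of_ne (Finset.ne_of_mem_erase hi)]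
    have hrank_le : M.rank ≤ m' := by
      set P : Matrix (Idx n) (Fin m') ℝ :=
        Matrix.of (fun ee j => ∏ i ∈ Finset.univ.erase i₀, b j i (ee i)) with hP
      set Q : Matrix (Fin m') (Fin (n i₀)) ℝ := Matrix.of (fun j t => b j i₀ t) with hQ
      have hMPQ : M = P * Q := by
        funext ee t
        show A (Function.update ee i₀ t) = _
        rw [hb]
        simp only [Matrix.mul_apply, hP, hQ, Matrix.of_apply]
        refine Finset.sum_congr rfl fun j _ => ?_
        rw [hupd (b j) ee t, mul_comm]
      calc M.rank ≤ P.rank := by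
              rw [hMPQ]
              exact le_trans (Matrix.rank_mul_le _ _) (min_le_left _ _)
        _ ≤ Fintype.card (Fin m') := Matrix.rank_le_card_width _
        _ = m' := Fintype.card_fin m'
    -- the `v j` with nonzero `σ j` lie in the range of `M`
    have hmulvec : ∀ j : Fin r, M.mulVec (a i₀ j) = σ j • v j := by
      intro j
      funext ee
      simp only [Matrix.mulVec, dotProduct, hM]
      have h1 : ∀ t : Fin (n i₀), A (Function.update ee i₀ t) * a i₀ j t
          = ∑ j' : Fin r, σ j' * v j' ee * (a i₀ j' t * a i₀ j t) := by
        intro t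
        rw [hA]
        simp only [decomp]
        rw [Finset.sum_mul]
        refine Finset.sum_congr rfl fun j' _ => ?_
        rw [hupd (fun i => a i j') ee t]
        show σ j' * (a i₀ j' t * v j' ee) * a i₀ j t = _
        ring
      simp_rw [h1]
      rw [Finset.sum_comm]
      have h2 : ∀ j' : Fin r, ∑ t : Fin (n i₀), σ j' * v j' ee * (a i₀ j' t * a i₀ j t)
          = if j' = j then σ j' * v j' ee else 0 := by
        intro j'
        rw [← Finset.mul_sum, hoa0 j' j]
        split <;> simp
      simp_rw [h2]
      rw [Finset.sum_ite_eq' Finset.univ j (fun j' => σ j' * v j' ee),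
        if_pos (Finset.mem_univ j)]
      show σ j * v j ee = σ j • v j ee
      rw [smul_eq_mul]
    have hrangev : ∀ x : {x // x ∈ F}, v (x : Fin r) ∈ LinearMap.range M.mulVecLin := by
      intro x
      have hx : σ (x : Fin r) ≠ 0 := by
        have hxF : (x : Fin r) ∈ Finset.univ.filter (fun j => σ j ≠ 0) := x.2
        exact (Finset.mem_filter.mp hxF).2
      refine ⟨(σ (x : Fin r))⁻¹ • a i₀ (x : Fin r), ?_⟩
      rw [map_smul]
      show (σ (x : Fin r))⁻¹ • M.mulVec (a i₀ (x : Fin r)) = _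
      rw [hmulvec, smul_smul, inv_mul_cancel₀ hx, one_smul]
    -- the `v` over nonzero coefficients are linearly independent
    have hli : LinearIndependent ℝ (fun x : {x // x ∈ F} => v (x : Fin r)) := by
      rw [Fintype.linearIndependent_iff]
      intro g hg x₀
      have hdot : ∑ ee : Idx n,
          (∑ x : {x // x ∈ F}, g x • v (x : Fin r)) ee * v (x₀ : Fin r) ee = 0 := by
        rw [hg]; simp
      have hswap : ∑ ee : Idx n,
          (∑ x : {x // x ∈ F}, g x • v (x : Fin r)) ee * v (x₀ : Fin r) ee
          = ∑ x : {x // x ∈ F}, g x * ((n i₀ : ℝ) * if (x : Fin r) = (x₀ : Fin r) then 1 else 0) := by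
        simp only [Finset.sum_apply, Pi.smul_apply, smul_eq_mul, Finset.sum_mul]
        rw [Finset.sum_comm]
        refine Finset.sum_congr rfl fun x _ => ?_
        rw [← hgram (x : Fin r) (x₀ : Fin r), Finset.mul_sum]
        exact Finset.sum_congr rfl fun ee _ => by ring
      rw [hswap] at hdot
      have h3 : ∀ x : {x // x ∈ F},
          g x * ((n i₀ : ℝ) * if (x : Fin r) = (x₀ : Fin r) then 1 else 0)
          = if x = x₀ then g x * (n i₀ : ℝ) else 0 := by
        intro x
        by_cases hxx : x = x₀
        · subst hxx; rw [if_pos rfl, if_pos rfl]; ring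
        · rw [if_neg hxx, if_neg (fun h => hxx (Subtype.ext h))]; ring
      simp_rw [h3] at hdot
      rw [Finset.sum_ite_eq' Finset.univ x₀ (fun x => g x * (n i₀ : ℝ)),
        if_pos (Finset.mem_univ x₀)] at hdot
      exact (mul_eq_zero.mp hdot).resolve_right (ne_of_gt hn0)
    have hrank_ge : m ≤ M.rank := by
      have hspan : Submodule.span ℝ (Set.range fun x : {x // x ∈ F} => v (x : Fin r))
          ≤ LinearMap.range M.mulVecLin := by
        rw [Submodule.span_le]
        rintro _ ⟨x, rfl⟩
        exact hrangev x
      have hcard := finrank_span_eq_card hli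
      rw [Fintype.card_coe] at hcard
      calc m = Module.finrank ℝ
            (Submodule.span ℝ (Set.range fun x : {x // x ∈ F} => v (x : Fin r))) := hcard.symm
        _ ≤ Module.finrank ℝ (LinearMap.range M.mulVecLin) := Submodule.finrank_mono hspan
        _ = M.rank := rfl
    omega
  -- conclude `trank A = m`
  have htrank : trank A = m := by
    refine le_antisymm (Nat.sInf_le hmem) (le_csInf ⟨m, hmem⟩ hlb)
  refine ⟨htrank, ?_⟩
  intro hmin
  have hmr : m ≤ r := by
    calc m = F.card := hmdef
      _ ≤ Finset.univ.card := Finset.card_filter_le _ _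
      _ = r := by simp
  rcases eq_or_lt_of_le hmr with heq | hlt
  · rw [htrank, heq]
  · exfalso
    refine hmin m hlt ⟨fun j => σ (e j), fun i j t => a i (e j) t, ?_, ?_, hAm⟩
    · intro i j
      exact hu i (e j)
    · intro i his j j'
      have h5 := ho i his (e j) (e j')
      show (∑ t, a i (e j) t * a i (e j') t) = _
      rw [h5]
      by_cases hjj : j = j'
      · subst hjj; rw [if_pos rfl, if_pos rfl]
      · rw [if_neg hjj, if_neg (fun h => hjj (e.injective (Subtype.ext h)))]

end POT
end

section
/- Let k ≥ 3 and s ≥ 1. For any tensor A ∈ P_s(n,r), the rank of A equals the rank of the matrix A_1 ∈ ℝ^{n_1 × (n_2⋯n_k)} obtained by flattening A with respect to its first factor. -/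
open scoped BigOperators

namespace POT

variable {k : ℕ}

/-- The flattening of a tensor with respect to its first factor: the matrix with row index
ranging over `Fin (n 0)` and column index over the remaining multi-indices. -/
noncomputable def flatten1 (n : Fin k → ℕ) (hk : 0 < k) (A : Tensor n) :
    Matrix (Fin (n ⟨0, hk⟩)) ((i : {j : Fin k // j ≠ ⟨0, hk⟩}) → Fin (n i.1)) ℝ :=
  Matrix.of fun x y =>
    A (fun i => if h : i = ⟨0, hk⟩ then Fin.cast (congrArg n h).symm x else y ⟨i, h⟩)


section AuxRank

lemma prod_split {n : Fin k → ℕ} (hk : 0 < k) (f : (i : Fin k) → Fin (n i) → ℝ) (idx : Idx n) :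
    ∏ i, f i (idx i)
      = f ⟨0, hk⟩ (idx ⟨0, hk⟩) *
        ∏ i : {j : Fin k // j ≠ ⟨0, hk⟩}, f i.1 (idx i.1) := by
  rw [← Finset.mul_prod_erase Finset.univ _ (Finset.mem_univ ⟨0, hk⟩)]
  congr 1
  exact Finset.prod_subtype (p := fun j => j ≠ (⟨0, hk⟩ : Fin k))
    (Finset.univ.erase ⟨0, hk⟩) (fun x => by simp) (fun i => f i (idx i))

lemma flatten1_eq_mul {n : Fin k → ℕ} (hk : 0 < k) (m : ℕ)
    (c : Fin m → Fin (n ⟨0, hk⟩) → ℝ)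
    (w : Fin m → ((i : {j : Fin k // j ≠ ⟨0, hk⟩}) → Fin (n i.1)) → ℝ)
    (A : Tensor n)
    (hA : ∀ idx : Idx n, A idx = ∑ j, c j (idx ⟨0, hk⟩) * w j (fun i => idx i.1)) :
    flatten1 n hk A = (Matrix.of fun x j => c j x) * (Matrix.of fun j y => w j y) := by
  ext x y
  show A _ = _
  rw [hA]
  rw [Matrix.mul_apply]
  apply Finset.sum_congr rfl
  intro j _
  simp only [Matrix.of_apply]
  have h1 : (fun i : {j : Fin k // j ≠ ⟨0, hk⟩} =>
      if h : (i : Fin k) = ⟨0, hk⟩ then Fin.cast (congrArg n h).symm x else y ⟨i, h⟩) = y := by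
    funext i
    simp [dif_neg i.2]
  rw [h1]
  congr 1

lemma flatten1_rank_le {n : Fin k → ℕ} (hk : 0 < k) (m : ℕ)
    (a : Fin m → (i : Fin k) → Fin (n i) → ℝ) (A : Tensor n)
    (hA : A = fun idx => ∑ j, ∏ i, a j i (idx i)) :
    (flatten1 n hk A).rank ≤ m := by
  have hmul := flatten1_eq_mul hk m (fun j => a j ⟨0, hk⟩)
    (fun j y => ∏ i : {j : Fin k // j ≠ ⟨0, hk⟩}, a j i.1 (y i)) A
    (by
      intro idx
      rw [hA]
      exact Finset.sum_congr rfl fun j _ => prod_split hk (fun i => a j i) idx)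
  rw [hmul]
  refine (Matrix.rank_mul_le_left _ _).trans ((Matrix.rank_le_card_width _).trans ?_)
  simp

end AuxRank

/-- Proposition: rank via first flattening.
Let `k ≥ 3` and `s ≥ 1`.  For any tensor `A ∈ P_s(n,r)`, the rank of `A` equals the rank of
the matrix obtained by flattening `A` with respect to its first factor. -/
theorem rank_eq_flattening_rank
    (k s r : ℕ) (n : Fin k → ℕ) (hk : 3 ≤ k) (hs : 1 ≤ s) (hsk : s ≤ k)
    (hr : ∀ i : Fin k, (i : ℕ) < s → r ≤ n i)
    (A : Tensor n) (hA : memP s r A) :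
    trank A = (flatten1 n (by omega) A).rank := by
  classical
  have hk0 : 0 < k := by omega
  set i0 : Fin k := ⟨0, hk0⟩ with hi0
  obtain ⟨σ, a, hunit, hortho, hAeq⟩ := hA
  have horth0 : orthoCols (a i0) := hortho i0 hs
  -- the "rows" of the flattening in the decomposition
  set ι := {j : Fin k // j ≠ i0} with hι
  set W : Fin r → ((i : ι) → Fin (n i.1)) → ℝ :=
    fun j y => σ j * ∏ i : ι, a i.1 j (y i) with hW
  have hAW : ∀ idx : Idx n, A idx = ∑ j, a i0 j (idx i0) * W j (fun i => idx i.1) := by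
    intro idx
    rw [hAeq]
    unfold decomp
    refine Finset.sum_congr rfl fun j _ => ?_
    rw [prod_split hk0 (fun i => a i j) idx]
    simp [hW]
    ring
  set U : Matrix (Fin (n i0)) (Fin r) ℝ := Matrix.of fun x j => a i0 j x with hU
  set M : Matrix (Fin r) ((i : ι) → Fin (n i.1)) ℝ := Matrix.of fun j y => W j y with hM
  have hflat : flatten1 n hk0 A = U * M :=
    flatten1_eq_mul hk0 r (fun j x => a i0 j x) W A hAW
  have hUtU : U.transpose * U = 1 := by
    ext j j'
    rw [Matrix.mul_apply, Matrix.one_apply]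
    simpa [hU] using horth0 j j'
  have hrank1 : (flatten1 n hk0 A).rank = M.rank := by
    rw [hflat]
    refine le_antisymm (Matrix.rank_mul_le_right U M) ?_
    calc M.rank = ((U.transpose * U) * M).rank := by rw [hUtU, Matrix.one_mul]
      _ = (U.transpose * (U * M)).rank := by rw [Matrix.mul_assoc]
      _ ≤ (U * M).rank := Matrix.rank_mul_le_right _ _
  have hrank2 : M.rank = Module.finrank ℝ (Submodule.span ℝ (Set.range W)) := by
    rw [Matrix.rank_eq_finrank_span_row]
    rfl
  -- pick a linearly independent spanning subfamily of the W j
  obtain ⟨b, hb_sub, hb_span, hb_li⟩ := exists_linearIndependent ℝ (Set.range W)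
  have hbfin : b.Finite := (Set.finite_range W).subset hb_sub
  haveI : Fintype b := hbfin.fintype
  set d : ℕ := b.toFinset.card with hd
  have hdim : Module.finrank ℝ (Submodule.span ℝ (Set.range W)) = d := by
    rw [← hb_span]
    exact finrank_span_set_eq_card hb_li
  set eqv := b.toFinset.equivFin with heqv
  set wt : Fin d → (((i : ι) → Fin (n i.1)) → ℝ) := fun t => (eqv.symm t : _) with hwt
  have hwt_mem : ∀ t, wt t ∈ b := fun t =>
    Set.mem_toFinset.mp (eqv.symm t).2
  have hwt_range : ∀ t, ∃ j, W j = wt t := fun t => hb_sub (hwt_mem t)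
  choose jf hjf using hwt_range
  have hWmem : ∀ j, W j ∈ Submodule.span ℝ b := by
    intro j
    rw [hb_span]
    exact Submodule.subset_span (Set.mem_range_self j)
  have hcex : ∀ j, ∃ c : (((i : ι) → Fin (n i.1)) → ℝ) →₀ ℝ,
      ↑c.support ⊆ b ∧ c.sum (fun v r => r • v) = W j :=
    fun j => Submodule.mem_span_set.mp (hWmem j)
  choose cf hcsupp hcsum using hcex
  have hWdec : ∀ j, W j = ∑ t : Fin d, cf j (wt t) • wt t := by
    intro j
    rw [← hcsum j, Finsupp.sum]
    rw [Finset.sum_subset (s₁ := (cf j).support) (s₂ := b.toFinset)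
      (fun v hv => Set.mem_toFinset.mpr (hcsupp j hv))
      (fun v _ hv => by rw [Finsupp.notMem_support_iff.mp hv, zero_smul])]
    rw [← Finset.sum_coe_sort b.toFinset (fun v => cf j v • v)]
    exact (Equiv.sum_comp eqv.symm (fun x : b.toFinset => cf j x.1 • (x.1 : _))).symm
  -- the short decomposition
  set cc : Fin d → (i : Fin k) → Fin (n i) → ℝ := fun t i =>
    if h : i = i0 then
      (fun v => σ (jf t) * ∑ j, cf j (wt t) * a i0 j (Fin.cast (congrArg n h) v))
    else a i (jf t) with hcc
  have hmem : A = fun idx => ∑ t : Fin d, ∏ i, cc t i (idx i) := by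
    funext idx
    rw [hAW idx]
    have hrhs : ∀ t : Fin d, ∏ i, cc t i (idx i)
        = (∑ j, cf j (wt t) * a i0 j (idx i0)) * wt t (fun i => idx i.1) := by
      intro t
      rw [prod_split hk0 (fun i => cc t i) idx]
      have hc0 : cc t i0 = fun v => σ (jf t) * ∑ j, cf j (wt t) * a i0 j v := by
        simp [hcc]
      have hcr : ∀ i : ι, cc t i.1 = a i.1 (jf t) := fun i => by
        simp [hcc, dif_neg i.2]
      rw [hc0]
      rw [Finset.prod_congr rfl (fun i _ => by rw [hcr i])]
      rw [← hjf t, hW]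
      ring
    rw [Finset.sum_congr rfl (fun t _ => hrhs t)]
    have hlhs : ∀ j, a i0 j (idx i0) * W j (fun i => idx i.1)
        = ∑ t : Fin d, cf j (wt t) * (a i0 j (idx i0) * wt t (fun i => idx i.1)) := by
      intro j
      rw [hWdec j]
      rw [Finset.sum_apply, Finset.mul_sum]
      refine Finset.sum_congr rfl fun t _ => ?_
      simp [Pi.smul_apply, smul_eq_mul]
      ring
    rw [Finset.sum_congr rfl (fun j _ => hlhs j), Finset.sum_comm]
    refine Finset.sum_congr rfl fun t _ => ?_
    rw [Finset.sum_mul]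
    refine Finset.sum_congr rfl fun j _ => ?_
    ring
  -- conclude
  have hd_mem : d ∈ {m : ℕ | ∃ a' : Fin m → (i : Fin k) → Fin (n i) → ℝ,
      A = fun idx => ∑ j, ∏ i, a' j i (idx i)} := ⟨cc, hmem⟩
  have hle : trank A ≤ d := Nat.sInf_le hd_mem
  have htr_mem : trank A ∈ {m : ℕ | ∃ a' : Fin m → (i : Fin k) → Fin (n i) → ℝ,
      A = fun idx => ∑ j, ∏ i, a' j i (idx i)} := Nat.sInf_mem ⟨d, hd_mem⟩
  obtain ⟨a', ha'⟩ := htr_mem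
  have hge : (flatten1 n hk0 A).rank ≤ trank A := flatten1_rank_le hk0 _ a' A ha'
  have hrk : (flatten1 n hk0 A).rank = d := by rw [hrank1, hrank2, hdim]
  have : trank A = (flatten1 n hk0 A).rank := le_antisymm (hrk ▸ hle) hge
  exact this

end POT
end

section
/- Let k ≥ 4 and k > s ≥ 3 be positive integers. A tensor T ∈ ℝ^{n_1}⊗⋯⊗ℝ^{n_k} lies in P_s(n,r) if and only if T lies in P_s(m,r) ∩ P_s(m',r), where m = (n_1,…,n_{s−1}, n_s·n_{s+1}, n_{s+2},…,n_k) is obtained from n by merging the s-th and (s+1)-th factors (viewing T as a (k−1)-way tensor via ℝ^{n_s}⊗ℝ^{n_{s+1}} ≅ ℝ^{n_s n_{s+1}}), and m' = (n_1,…,n_{s−2}, n_{s−1}·n_{s+1}, n_s, n_{s+2},…,n_k) is obtained by merging the (s−1)-th and (s+1)-th factors. -/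
open scoped BigOperators

namespace POT

variable {k : ℕ}

/-- Membership in the set of partially orthogonal tensors of rank at most `r` over an
arbitrary finite index set `ι` of tensor factors, with the factors in `Orth` required to
have orthonormal factor matrices (all factor matrices have unit-norm columns). -/
def memPG {ι : Type} [Fintype ι] (m : ι → ℕ) (Orth : ι → Prop) (r : ℕ)
    (A : ((i : ι) → Fin (m i)) → ℝ) : Prop :=
  ∃ (σ : Fin r → ℝ) (a : (i : ι) → Fin r → Fin (m i) → ℝ),
    (∀ i j, (∑ t, a i j t * a i j t) = 1) ∧
    (∀ i, Orth i → ∀ j j', (∑ t, a i j t * a i j' t) = if j = j' then (1 : ℝ) else 0) ∧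
    A = fun idx => ∑ j, σ j * ∏ i, a i j (idx i)

/-- The index set obtained from `Fin k` by removing the factor `q` (which gets merged). -/
abbrev MIdx (k : ℕ) (q : Fin k) : Type := {j : Fin k // j ≠ q}

/-- The dimension vector after merging factor `q` into factor `c`. -/
def mdims (n : Fin k → ℕ) (c q : Fin k) (i : MIdx k q) : ℕ :=
  if i.1 = c then n c * n q else n i.1

theorem mdims_at_c (n : Fin k → ℕ) (c q : Fin k) (hcq : c ≠ q) :
    mdims n c q ⟨c, hcq⟩ = n c * n q := if_pos rfl

theorem mdims_ne (n : Fin k → ℕ) (c q : Fin k) {i : Fin k} (hiq : i ≠ q) (hic : ¬ i = c) :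
    mdims n c q ⟨i, hiq⟩ = n i := if_neg hic

/-- The `(k-1)`-way tensor obtained from `A` by merging the `q`-th tensor factor into the
`c`-th one, via the identification `ℝ^{n c} ⊗ ℝ^{n q} ≅ ℝ^{n c · n q}`. -/
noncomputable def mergeAt (n : Fin k → ℕ) (c q : Fin k) (hcq : c ≠ q) (A : Tensor n) :
    ((i : MIdx k q) → Fin (mdims n c q i)) → ℝ :=
  fun idx => A (fun i =>
    if hiq : i = q then
      Fin.cast (congrArg n hiq).symm
        ((finProdFinEquiv.symm (Fin.cast (mdims_at_c n c q hcq) (idx ⟨c, hcq⟩))).2)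
    else if hic : i = c then
      Fin.cast (congrArg n hic).symm
        ((finProdFinEquiv.symm (Fin.cast (mdims_at_c n c q hcq) (idx ⟨c, hcq⟩))).1)
    else
      Fin.cast (mdims_ne n c q hiq hic) (idx ⟨i, hiq⟩))



lemma sum_cast {m m' : ℕ} (h : m = m') (f : Fin m' → ℝ) :
    ∑ t : Fin m, f (Fin.cast h t) = ∑ t : Fin m', f t :=
  Equiv.sum_comp (finCongr h) f

lemma prod_split1 {α : Type*} {M : Type*} [Fintype α] [DecidableEq α] [CommMonoid M]
    (a : α) (f : α → M) :
    ∏ i, f i = f a * ∏ i : {x : α // x ≠ a}, f i.1 := by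
  rw [← Finset.mul_prod_erase Finset.univ f (Finset.mem_univ a)]
  congr 1
  exact Finset.prod_subtype (Finset.univ.erase a) (by simp [Finset.mem_erase]) f

lemma prod_split2 {α : Type*} {M : Type*} [Fintype α] [DecidableEq α] [CommMonoid M]
    (a b : α) (hab : a ≠ b) (f : α → M) :
    ∏ i, f i = f a * f b * ∏ i : {x : α // x ≠ a ∧ x ≠ b}, f i.1 := by
  have h1 : b ∈ Finset.univ.erase a := by simp [Finset.mem_erase, hab.symm]
  rw [← Finset.mul_prod_erase Finset.univ f (Finset.mem_univ a),
      ← Finset.mul_prod_erase (Finset.univ.erase a) f h1, ← mul_assoc]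
  congr 1
  exact Finset.prod_subtype ((Finset.univ.erase a).erase b)
    (by intro x; simp only [Finset.mem_erase, Finset.mem_univ, and_true]; tauto) f

lemma prod_split3 {α : Type*} {M : Type*} [Fintype α] [DecidableEq α] [CommMonoid M]
    (a b c : α) (hab : a ≠ b) (hac : a ≠ c) (hbc : b ≠ c) (f : α → M) :
    ∏ i, f i = f a * f b * f c * ∏ i : {x : α // x ≠ a ∧ x ≠ b ∧ x ≠ c}, f i.1 := by
  have h1 : b ∈ Finset.univ.erase a := by simp [Finset.mem_erase, hab.symm]
  have h2 : c ∈ (Finset.univ.erase a).erase b := by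
    simp [Finset.mem_erase, hac.symm, hbc.symm]
  rw [← Finset.mul_prod_erase Finset.univ f (Finset.mem_univ a),
      ← Finset.mul_prod_erase (Finset.univ.erase a) f h1,
      ← Finset.mul_prod_erase ((Finset.univ.erase a).erase b) f h2,
      ← mul_assoc, ← mul_assoc]
  congr 1
  exact Finset.prod_subtype (((Finset.univ.erase a).erase b).erase c)
    (by intro x; simp only [Finset.mem_erase, Finset.mem_univ, and_true]; tauto) f

lemma sum_pi_prod {ι : Type*} [Fintype ι] [DecidableEq ι] {m : ι → Type*}
    [∀ i, Fintype (m i)] (f : (i : ι) → m i → ℝ) :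
    ∑ g : (i : ι) → m i, ∏ i, f i (g i) = ∏ i, ∑ t, f i t := by
  rw [Finset.prod_univ_sum (fun _ => Finset.univ) f, Fintype.piFinset_univ]

lemma exists_unit_vec {Y Z : Type*} [Fintype Y] [Fintype Z] (f : Y → Z → ℝ)
    (hf : ∑ y, ∑ z, f y z * f y z = 1) : ∃ v : Z → ℝ, ∑ z, v z * v z = 1 := by
  have hy : ∃ y, (∑ z, f y z * f y z) ≠ 0 := by
    by_contra h
    push_neg at h
    rw [Finset.sum_congr rfl (fun y _ => h y)] at hf
    simp at hf
  obtain ⟨y, hy⟩ := hy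
  set S := ∑ z, f y z * f y z with hS
  have hS0 : 0 < S := lt_of_le_of_ne (Finset.sum_nonneg fun z _ => mul_self_nonneg _) (Ne.symm hy)
  refine ⟨fun z => f y z / Real.sqrt S, ?_⟩
  have h2 : ∀ z, f y z / Real.sqrt S * (f y z / Real.sqrt S) = (f y z * f y z) / S := by
    intro z
    rw [div_mul_div_comm, Real.mul_self_sqrt hS0.le]
  rw [Finset.sum_congr rfl (fun z _ => h2 z), ← Finset.sum_div, ← hS, div_self hy]

lemma exists_inj_extend {r : ℕ} (p : Fin r → Prop) [DecidablePred p] (π : Fin r → Fin r)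
    (hinj : ∀ j j', p j → p j' → π j = π j' → j = j') :
    ∃ ρ : Fin r → Fin r, Function.Injective ρ ∧ ∀ j, p j → ρ j = π j := by
  classical
  set s : Finset (Fin r) := Finset.univ.filter p with hs
  set t : Finset (Fin r) := s.image π with ht
  have hcard : t.card = s.card := Finset.card_image_of_injOn
    (fun x hx y hy hxy => hinj x y (by simpa [hs] using hx) (by simpa [hs] using hy) hxy)
  have hcc : (Finset.univ \ s).card = (Finset.univ \ t).card := by
    rw [Finset.card_sdiff_of_subset (Finset.subset_univ _), Finset.card_sdiff_of_subset (Finset.subset_univ _), hcard]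
  obtain e := Finset.equivOfCardEq hcc
  have hmem : ∀ j, ¬ p j → j ∈ Finset.univ \ s := by intro j h; simp [hs, h]
  refine ⟨fun j => if h : p j then π j else (e ⟨j, hmem j h⟩ : Fin r), ?_, ?_⟩
  · intro j j' hjj'
    dsimp only at hjj'
    by_cases h : p j <;> by_cases h' : p j'
    · rw [dif_pos h, dif_pos h'] at hjj'
      exact hinj _ _ h h' hjj'
    · rw [dif_pos h, dif_neg h'] at hjj'
      exfalso
      have h1 : π j ∈ t := Finset.mem_image_of_mem π (by simp [hs, h])
      have h2 : (e ⟨j', hmem j' h'⟩ : Fin r) ∈ Finset.univ \ t := (e _).2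
      rw [← hjj'] at h2
      simp [h1] at h2
    · rw [dif_neg h, dif_pos h'] at hjj'
      exfalso
      have h1 : π j' ∈ t := Finset.mem_image_of_mem π (by simp [hs, h'])
      have h2 : (e ⟨j, hmem j h⟩ : Fin r) ∈ Finset.univ \ t := (e _).2
      rw [hjj'] at h2
      simp [h1] at h2
    · rw [dif_neg h, dif_neg h'] at hjj'
      have := e.injective (Subtype.ext hjj')
      simpa using congrArg Subtype.val this
  · intro j h
    simp [h]


lemma sum_delta_mul {r : ℕ} (j : Fin r) (f : Fin r → ℝ) :
    ∑ j', (if j = j' then (1:ℝ) else 0) * f j' = f j := by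
  simp [ite_mul]

lemma swap_sum {G : Type*} [Fintype G] {r : ℕ} (e : G → ℝ) (F : Fin r → G → ℝ)
    (f : Fin r → ℝ) :
    ∑ g, e g * (∑ j, F j g * f j) = ∑ j, (∑ g, e g * F j g) * f j := by
  calc ∑ g, e g * (∑ j, F j g * f j) = ∑ g, ∑ j, e g * F j g * f j := by
        refine Finset.sum_congr rfl fun g _ => ?_
        rw [Finset.mul_sum]
        exact Finset.sum_congr rfl fun j _ => by ring
    _ = ∑ j, ∑ g, e g * F j g * f j := Finset.sum_comm
    _ = ∑ j, (∑ g, e g * F j g) * f j := by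
        refine Finset.sum_congr rfl fun j _ => ?_
        rw [Finset.sum_mul]

lemma gram_expand {Y Z : Type*} [Fintype Y] [Fintype Z] {r : ℕ}
    (c : Fin r → Y → ℝ) (hc : ∀ j j', ∑ y, c j y * c j' y = if j = j' then (1:ℝ) else 0)
    (w : Fin r → Z → ℝ) :
    ∑ y, ∑ z, (∑ j0, c j0 y * w j0 z) * (∑ j1, c j1 y * w j1 z)
      = ∑ j0, ∑ z, w j0 z * w j0 z := by
  calc ∑ y, ∑ z, (∑ j0, c j0 y * w j0 z) * (∑ j1, c j1 y * w j1 z)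
      = ∑ y, ∑ j0, ∑ j1, (c j0 y * c j1 y) * (∑ z, w j0 z * w j1 z) := by
        refine Finset.sum_congr rfl fun y _ => ?_
        calc ∑ z, (∑ j0, c j0 y * w j0 z) * (∑ j1, c j1 y * w j1 z)
            = ∑ z, ∑ j0, ∑ j1, (c j0 y * w j0 z) * (c j1 y * w j1 z) := by
              exact Finset.sum_congr rfl fun z _ => by
                rw [Finset.sum_mul_sum]
          _ = ∑ j0, ∑ z, ∑ j1, (c j0 y * w j0 z) * (c j1 y * w j1 z) := Finset.sum_comm
          _ = ∑ j0, ∑ j1, ∑ z, (c j0 y * w j0 z) * (c j1 y * w j1 z) := by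
              exact Finset.sum_congr rfl fun j0 _ => Finset.sum_comm
          _ = ∑ j0, ∑ j1, (c j0 y * c j1 y) * (∑ z, w j0 z * w j1 z) := by
              refine Finset.sum_congr rfl fun j0 _ => Finset.sum_congr rfl fun j1 _ => ?_
              rw [Finset.mul_sum]
              exact Finset.sum_congr rfl fun z _ => by ring
    _ = ∑ j0, ∑ j1, (∑ y, c j0 y * c j1 y) * (∑ z, w j0 z * w j1 z) := by
        rw [Finset.sum_comm]
        refine Finset.sum_congr rfl fun j0 _ => ?_
        rw [Finset.sum_comm]
        exact Finset.sum_congr rfl fun j1 _ => (Finset.sum_mul _ _ _).symm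
    _ = ∑ j0, ∑ z, w j0 z * w j0 z := by
        refine Finset.sum_congr rfl fun j0 _ => ?_
        rw [Finset.sum_congr rfl (fun j1 _ => by rw [hc j0 j1])]
        rw [sum_delta_mul j0 (fun j1 => ∑ z, w j0 z * w j1 z)]

lemma core {G X Y Z : Type*} [Fintype G] [Fintype X] [Fintype Y] [Fintype Z] {r : ℕ}
    (σ τ : Fin r → ℝ) (E F : Fin r → G → ℝ) (a : Fin r → X → ℝ)
    (B : Fin r → Y → Z → ℝ) (C : Fin r → X → Z → ℝ) (c : Fin r → Y → ℝ)
    (hE : ∀ j j', ∑ g, E j g * E j' g = if j = j' then (1:ℝ) else 0)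
    (hF : ∀ j j', ∑ g, F j g * F j' g = if j = j' then (1:ℝ) else 0)
    (ha : ∀ j j', ∑ x, a j x * a j' x = if j = j' then (1:ℝ) else 0)
    (hc : ∀ j j', ∑ y, c j y * c j' y = if j = j' then (1:ℝ) else 0)
    (hB : ∀ j, ∑ y, ∑ z, B j y z * B j y z = 1)
    (hT : ∀ g x y z, ∑ j, σ j * (E j g * (a j x * B j y z))
        = ∑ j, τ j * (F j g * (C j x z * c j y))) :
    ∃ (u : Fin r → Y → ℝ) (v : Fin r → Z → ℝ),
      (∀ j j', ∑ y, u j y * u j' y = if j = j' then (1:ℝ) else 0) ∧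
      (∀ j, ∑ z, v j z * v j z = 1) ∧
      (∀ j y z, σ j * B j y z = σ j * (u j y * v j z)) := by
  classical
  set β : Fin r → Fin r → ℝ := fun j j0 => ∑ g, E j g * F j0 g with hβ
  set w : Fin r → Fin r → Z → ℝ := fun j j0 z => ∑ y, c j0 y * B j y z with hw
  set d : Fin r → Fin r → Z → ℝ := fun j j0 z => ∑ x, a j x * C j0 x z with hd
  -- I1 : contract hT against E j
  have I1 : ∀ j x y z, σ j * (a j x * B j y z)
      = ∑ j0, β j j0 * (τ j0 * (C j0 x z * c j0 y)) := by
    intro j x y z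
    have h1 : ∑ g, E j g * (∑ j', E j' g * (σ j' * (a j' x * B j' y z)))
        = σ j * (a j x * B j y z) := by
      rw [swap_sum (E j) E (fun j' => σ j' * (a j' x * B j' y z))]
      rw [Finset.sum_congr rfl (fun j' _ => by rw [hE j j'])]
      exact sum_delta_mul j _
    have h2 : ∀ g, (∑ j', E j' g * (σ j' * (a j' x * B j' y z)))
        = ∑ j', F j' g * (τ j' * (C j' x z * c j' y)) := by
      intro g
      have := hT g x y z
      calc ∑ j', E j' g * (σ j' * (a j' x * B j' y z))
          = ∑ j', σ j' * (E j' g * (a j' x * B j' y z)) :=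
            Finset.sum_congr rfl fun j' _ => by ring
        _ = ∑ j', τ j' * (F j' g * (C j' x z * c j' y)) := this
        _ = ∑ j', F j' g * (τ j' * (C j' x z * c j' y)) :=
            Finset.sum_congr rfl fun j' _ => by ring
    rw [Finset.sum_congr rfl (fun g _ => by rw [h2 g])] at h1
    rw [swap_sum (E j) F (fun j' => τ j' * (C j' x z * c j' y))] at h1
    exact h1.symm
  -- I2 : contract hT against F j0
  have I2 : ∀ j0 x y z, τ j0 * (C j0 x z * c j0 y)
      = ∑ j, β j j0 * (σ j * (a j x * B j y z)) := by
    intro j0 x y z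
    have h1 : ∑ g, F j0 g * (∑ j', F j' g * (τ j' * (C j' x z * c j' y)))
        = τ j0 * (C j0 x z * c j0 y) := by
      rw [swap_sum (F j0) F (fun j' => τ j' * (C j' x z * c j' y))]
      rw [Finset.sum_congr rfl (fun j' _ => by rw [hF j0 j'])]
      exact sum_delta_mul j0 _
    have h2 : ∀ g, (∑ j', F j' g * (τ j' * (C j' x z * c j' y)))
        = ∑ j', E j' g * (σ j' * (a j' x * B j' y z)) := by
      intro g
      have := (hT g x y z).symm
      calc ∑ j', F j' g * (τ j' * (C j' x z * c j' y))
          = ∑ j', τ j' * (F j' g * (C j' x z * c j' y)) :=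
            Finset.sum_congr rfl fun j' _ => by ring
        _ = ∑ j', σ j' * (E j' g * (a j' x * B j' y z)) := this
        _ = ∑ j', E j' g * (σ j' * (a j' x * B j' y z)) :=
            Finset.sum_congr rfl fun j' _ => by ring
    rw [Finset.sum_congr rfl (fun g _ => by rw [h2 g])] at h1
    rw [swap_sum (F j0) E (fun j' => σ j' * (a j' x * B j' y z))] at h1
    rw [← h1]
    refine Finset.sum_congr rfl fun j' _ => ?_
    have : ∑ g, F j0 g * E j' g = β j' j0 := by
      rw [hβ]
      exact Finset.sum_congr rfl fun g _ => by ring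
    rw [this]
  -- I3 : contract I1 against a j over x
  have I3 : ∀ j y z, σ j * B j y z = ∑ j0, β j j0 * (τ j0 * (d j j0 z * c j0 y)) := by
    intro j y z
    have h1 : ∑ x, a j x * (σ j * (a j x * B j y z)) = σ j * B j y z := by
      have : ∀ x, a j x * (σ j * (a j x * B j y z)) = (a j x * a j x) * (σ j * B j y z) :=
        fun x => by ring
      rw [Finset.sum_congr rfl (fun x _ => this x), ← Finset.sum_mul, ha j j, if_pos rfl,
        one_mul]
    rw [← h1]
    rw [Finset.sum_congr rfl (fun x _ => by rw [I1 j x y z])]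
    have h2 : ∀ x, (∑ j0, β j j0 * (τ j0 * (C j0 x z * c j0 y)))
        = ∑ j0, C j0 x z * (β j j0 * (τ j0 * c j0 y)) :=
      fun x => Finset.sum_congr rfl fun j0 _ => by ring
    rw [Finset.sum_congr rfl (fun x _ => congrArg (a j x * ·) (h2 x))]
    rw [swap_sum (a j) (fun j0 x => C j0 x z) (fun j0 => β j j0 * (τ j0 * c j0 y))]
    exact Finset.sum_congr rfl fun j0 _ => by rw [hd]; ring
  -- I4 : contract I2 against c j0 over y
  have I4 : ∀ j0 x z, τ j0 * C j0 x z = ∑ j, β j j0 * (σ j * (a j x * w j j0 z)) := by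
    intro j0 x z
    have h1 : ∑ y, c j0 y * (τ j0 * (C j0 x z * c j0 y)) = τ j0 * C j0 x z := by
      have : ∀ y, c j0 y * (τ j0 * (C j0 x z * c j0 y)) = (c j0 y * c j0 y) * (τ j0 * C j0 x z) :=
        fun y => by ring
      rw [Finset.sum_congr rfl (fun y _ => this y), ← Finset.sum_mul, hc j0 j0, if_pos rfl,
        one_mul]
    rw [← h1]
    rw [Finset.sum_congr rfl (fun y _ => by rw [I2 j0 x y z])]
    have h2 : ∀ y, (∑ j, β j j0 * (σ j * (a j x * B j y z)))
        = ∑ j, B j y z * (β j j0 * (σ j * a j x)) :=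
      fun y => Finset.sum_congr rfl fun j _ => by ring
    rw [Finset.sum_congr rfl (fun y _ => congrArg (c j0 y * ·) (h2 y))]
    rw [swap_sum (c j0) (fun j y => B j y z) (fun j => β j j0 * (σ j * a j x))]
    refine Finset.sum_congr rfl fun j _ => ?_
    rw [hw]
    ring
  -- I5 : contract I3 against c j1 over y
  have I5 : ∀ j j1 z, σ j * w j j1 z = β j j1 * (τ j1 * d j j1 z) := by
    intro j j1 z
    have h1 : ∑ y, c j1 y * (σ j * B j y z) = σ j * w j j1 z := by
      rw [hw, Finset.mul_sum]
      exact Finset.sum_congr rfl fun y _ => by ring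
    rw [← h1]
    rw [Finset.sum_congr rfl (fun y _ => by rw [I3 j y z])]
    have h2 : ∀ y, (∑ j0, β j j0 * (τ j0 * (d j j0 z * c j0 y)))
        = ∑ j0, c j0 y * (β j j0 * (τ j0 * d j j0 z)) :=
      fun y => Finset.sum_congr rfl fun j0 _ => by ring
    rw [Finset.sum_congr rfl (fun y _ => congrArg (c j1 y * ·) (h2 y))]
    rw [swap_sum (c j1) c (fun j0 => β j j0 * (τ j0 * d j j0 z))]
    rw [Finset.sum_congr rfl (fun j0 _ => by rw [hc j1 j0])]
    exact sum_delta_mul j1 _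
  -- I6 : contract I4 against a j1 over x
  have I6 : ∀ j1 j0 z, τ j0 * d j1 j0 z = β j1 j0 * (σ j1 * w j1 j0 z) := by
    intro j1 j0 z
    have h1 : ∑ x, a j1 x * (τ j0 * C j0 x z) = τ j0 * d j1 j0 z := by
      rw [hd, Finset.mul_sum]
      exact Finset.sum_congr rfl fun x _ => by ring
    rw [← h1]
    rw [Finset.sum_congr rfl (fun x _ => by rw [I4 j0 x z])]
    have h2 : ∀ x, (∑ j, β j j0 * (σ j * (a j x * w j j0 z)))
        = ∑ j, a j x * (β j j0 * (σ j * w j j0 z)) :=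
      fun x => Finset.sum_congr rfl fun j _ => by ring
    rw [Finset.sum_congr rfl (fun x _ => congrArg (a j1 x * ·) (h2 x))]
    rw [swap_sum (a j1) a (fun j => β j j0 * (σ j * w j j0 z))]
    rw [Finset.sum_congr rfl (fun j _ => by rw [ha j1 j])]
    exact sum_delta_mul j1 _
  have key : ∀ j j0 z, σ j * w j j0 z = (β j j0 * β j j0) * (σ j * w j j0 z) := by
    intro j j0 z
    calc σ j * w j j0 z = β j j0 * (τ j0 * d j j0 z) := I5 j j0 z
      _ = β j j0 * (β j j0 * (σ j * w j j0 z)) := by rw [I6 j j0 z]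
      _ = (β j j0 * β j j0) * (σ j * w j j0 z) := by ring
  have βsq : ∀ j j0, σ j ≠ 0 → w j j0 ≠ 0 → β j j0 * β j j0 = 1 := by
    intro j j0 hj hw0
    obtain ⟨z, hz⟩ := Function.ne_iff.1 hw0
    have h := key j j0 z
    have h2 : (β j j0 * β j j0 - 1) * (σ j * w j j0 z) = 0 := by linarith [h]
    rcases mul_eq_zero.1 h2 with h3 | h3
    · linarith
    · exact absurd h3 (mul_ne_zero hj hz)
  have Fexp : ∀ j j0, β j j0 * β j j0 = 1 → ∀ g, F j0 g = β j j0 * E j g := by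
    intro j j0 hb g
    have hS : ∑ g', (F j0 g' - β j j0 * E j g') * (F j0 g' - β j j0 * E j g') = 0 := by
      have expand : ∀ g', (F j0 g' - β j j0 * E j g') * (F j0 g' - β j j0 * E j g')
          = F j0 g' * F j0 g' + (β j j0 * β j j0) * (E j g' * E j g')
            - (2 * β j j0) * (E j g' * F j0 g') := fun g' => by ring
      rw [Finset.sum_congr rfl (fun g' _ => expand g')]
      rw [Finset.sum_sub_distrib, Finset.sum_add_distrib, ← Finset.mul_sum, ← Finset.mul_sum]
      rw [hF j0 j0, hE j j, if_pos rfl, if_pos rfl]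
      have : ∑ g', E j g' * F j0 g' = β j j0 := rfl
      rw [this]
      linear_combination (-1 : ℝ) * hb
    have := (Finset.sum_eq_zero_iff_of_nonneg (fun g' _ => mul_self_nonneg _)).1 hS g
      (Finset.mem_univ g)
    have := mul_self_eq_zero.1 this
    linarith
  have hex : ∀ j, σ j ≠ 0 → ∃ j0, w j j0 ≠ 0 := by
    intro j hj
    by_contra h
    push_neg at h
    have Bz : ∀ y z, B j y z = 0 := by
      intro y z
      have hBe : B j y z = ∑ j0, c j0 y * w j j0 z := by
        have h3 := I3 j y z
        have h4 : ∀ j0, β j j0 * (τ j0 * (d j j0 z * c j0 y)) = σ j * (c j0 y * w j j0 z) := by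
          intro j0
          have h5 := I5 j j0 z
          calc β j j0 * (τ j0 * (d j j0 z * c j0 y))
              = (β j j0 * (τ j0 * d j j0 z)) * c j0 y := by ring
            _ = (σ j * w j j0 z) * c j0 y := by rw [← h5]
            _ = σ j * (c j0 y * w j j0 z) := by ring
        rw [Finset.sum_congr rfl (fun j0 _ => h4 j0), ← Finset.mul_sum] at h3
        exact mul_left_cancel₀ hj h3
      rw [hBe]
      apply Finset.sum_eq_zero
      intro j0 _
      rw [h j0]
      simp
    have := hB j
    rw [Finset.sum_congr rfl (fun y _ => Finset.sum_congr rfl fun z _ =>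
      show B j y z * B j y z = 0 by rw [Bz y z, zero_mul])] at this
    simp at this
  let π : Fin r → Fin r := fun j => if h : σ j ≠ 0 then Classical.choose (hex j h) else j
  have hπw : ∀ j, σ j ≠ 0 → w j (π j) ≠ 0 := by
    intro j h
    simp only [π, dif_pos h]
    exact Classical.choose_spec (hex j h)
  have uniq : ∀ j, σ j ≠ 0 → ∀ j0, w j j0 ≠ 0 → j0 = π j := by
    intro j hj j0 h0
    by_contra hne
    have b0 := βsq j j0 hj h0
    have b1 := βsq j (π j) hj (hπw j hj)
    have f0 := Fexp j j0 b0
    have f1 := Fexp j (π j) b1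
    have horth := hF j0 (π j)
    rw [if_neg hne] at horth
    have : ∑ g, F j0 g * F (π j) g = β j j0 * β j (π j) := by
      calc ∑ g, F j0 g * F (π j) g
          = ∑ g, (β j j0 * β j (π j)) * (E j g * E j g) := by
            refine Finset.sum_congr rfl fun g _ => ?_
            rw [f0 g, f1 g]
            ring
        _ = (β j j0 * β j (π j)) * ∑ g, E j g * E j g := by rw [← Finset.mul_sum]
        _ = β j j0 * β j (π j) := by rw [hE j j, if_pos rfl, mul_one]
    rw [this] at horth
    have hb0 : β j j0 ≠ 0 := fun h => by rw [h] at b0; linarith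
    have hb1 : β j (π j) ≠ 0 := fun h => by rw [h] at b1; linarith
    exact (mul_ne_zero hb0 hb1) horth
  have Bexp : ∀ j, σ j ≠ 0 → ∀ y z, B j y z = ∑ j0, c j0 y * w j j0 z := by
    intro j hj y z
    have h3 := I3 j y z
    have h4 : ∀ j0, β j j0 * (τ j0 * (d j j0 z * c j0 y)) = σ j * (c j0 y * w j j0 z) := by
      intro j0
      have h5 := I5 j j0 z
      calc β j j0 * (τ j0 * (d j j0 z * c j0 y))
          = (β j j0 * (τ j0 * d j j0 z)) * c j0 y := by ring
        _ = (σ j * w j j0 z) * c j0 y := by rw [← h5]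
        _ = σ j * (c j0 y * w j j0 z) := by ring
    rw [Finset.sum_congr rfl (fun j0 _ => h4 j0), ← Finset.mul_sum] at h3
    exact mul_left_cancel₀ hj h3
  have Brank : ∀ j, σ j ≠ 0 → ∀ y z, B j y z = c (π j) y * w j (π j) z := by
    intro j hj y z
    rw [Bexp j hj y z]
    apply Finset.sum_eq_single (π j)
    · intro j0 _ hne
      by_cases h0 : w j j0 = 0
      · rw [h0]; simp
      · exact absurd (uniq j hj j0 h0) hne
    · intro h
      exact absurd (Finset.mem_univ _) h
  have wnorm : ∀ j, σ j ≠ 0 → ∑ z, w j (π j) z * w j (π j) z = 1 := by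
    intro j hj
    have hn : ∑ y, ∑ z, B j y z * B j y z = 1 := hB j
    rw [Finset.sum_congr rfl (fun y _ => Finset.sum_congr rfl fun z _ => by
      rw [Bexp j hj y z])] at hn
    rw [gram_expand c hc (fun j0 => w j j0)] at hn
    rw [← hn]
    symm
    apply Finset.sum_eq_single (π j)
    · intro j0 _ hne
      apply Finset.sum_eq_zero
      intro z _
      by_cases h0 : w j j0 = 0
      · rw [h0]; simp
      · exact absurd (uniq j hj j0 h0) hne
    · intro h
      exact absurd (Finset.mem_univ _) h
  have πinj : ∀ j j', σ j ≠ 0 → σ j' ≠ 0 → π j = π j' → j = j' := by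
    intro j j' hj hj' hπ
    by_contra hne
    have b0 := βsq j (π j) hj (hπw j hj)
    have b1 := βsq j' (π j) hj' (by rw [hπ]; exact hπw j' hj')
    have f0 := Fexp j (π j) b0
    have f1 := Fexp j' (π j) b1
    have horth := hE j j'
    rw [if_neg hne] at horth
    have hkey : β j (π j) * β j' (π j) * (∑ g, E j g * E j' g) = 1 := by
      rw [Finset.mul_sum]
      calc ∑ g, β j (π j) * β j' (π j) * (E j g * E j' g)
          = ∑ g, F (π j) g * F (π j) g := by
            refine Finset.sum_congr rfl fun g _ => ?_
            calc β j (π j) * β j' (π j) * (E j g * E j' g)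
                = (β j (π j) * E j g) * (β j' (π j) * E j' g) := by ring
              _ = F (π j) g * F (π j) g := by rw [← f0 g, ← f1 g]
        _ = 1 := by rw [hF (π j) (π j), if_pos rfl]
    rw [horth, mul_zero] at hkey
    exact one_ne_zero hkey.symm
  obtain ⟨ρ, hρinj, hρ⟩ := exists_inj_extend (fun j => σ j ≠ 0) π πinj
  refine ⟨fun j => c (ρ j),
    fun j => if h : σ j ≠ 0 then w j (π j)
      else Classical.choose (exists_unit_vec (B j) (hB j)), ?_, ?_, ?_⟩
  · intro j j'
    rw [hc (ρ j) (ρ j')]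
    exact if_congr ⟨fun h => hρinj h, fun h => congrArg ρ h⟩ rfl rfl
  · intro j
    by_cases h : σ j ≠ 0
    · simp only [dif_pos h]
      exact wnorm j h
    · simp only [dif_neg h]
      exact Classical.choose_spec (exists_unit_vec (B j) (hB j))
  · intro j y z
    by_cases h : σ j ≠ 0
    · simp only [dif_pos h, hρ j h]
      rw [Brank j h y z]
    · push_neg at h
      rw [h]
      ring
variable {k : ℕ}

lemma cast_cast {a b : ℕ} (h1 : a = b) (h2 : b = a) (x : Fin a) :
    Fin.cast h2 (Fin.cast h1 x) = x := Fin.ext (by simp)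

lemma cast_self {a : ℕ} (h : a = a) (x : Fin a) : Fin.cast h x = x := Fin.ext (by simp)

lemma sum_kron_mul {X Y : Type*} [Fintype X] [Fintype Y] (f g : X → ℝ) (p q : Y → ℝ) :
    ∑ x, ∑ y, (f x * p y) * (g x * q y) = (∑ x, f x * g x) * (∑ y, p y * q y) := by
  calc ∑ x, ∑ y, (f x * p y) * (g x * q y) = ∑ x, ∑ y, (f x * g x) * (p y * q y) :=
        Finset.sum_congr rfl fun x _ => Finset.sum_congr rfl fun y _ => by ring
    _ = (∑ x, f x * g x) * (∑ y, p y * q y) := (Finset.sum_mul_sum _ _ _ _).symm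

/-- the inner (index-unmerging) function of `mergeAt` -/
def unglueIdx (n : Fin k → ℕ) (c q : Fin k) (hcq : c ≠ q)
    (idx : (i : MIdx k q) → Fin (mdims n c q i)) : Idx n := fun i =>
  if hiq : i = q then
    Fin.cast (congrArg n hiq).symm
      ((finProdFinEquiv.symm (Fin.cast (mdims_at_c n c q hcq) (idx ⟨c, hcq⟩))).2)
  else if hic : i = c then
    Fin.cast (congrArg n hic).symm
      ((finProdFinEquiv.symm (Fin.cast (mdims_at_c n c q hcq) (idx ⟨c, hcq⟩))).1)
  else
    Fin.cast (mdims_ne n c q hiq hic) (idx ⟨i, hiq⟩)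

lemma mergeAt_eq (n : Fin k → ℕ) (c q : Fin k) (hcq : c ≠ q) (T : Tensor n)
    (idx : (i : MIdx k q) → Fin (mdims n c q i)) :
    mergeAt n c q hcq T idx = T (unglueIdx n c q hcq idx) := rfl

lemma unglueIdx_q (n : Fin k → ℕ) (c q : Fin k) (hcq : c ≠ q)
    (idx : (i : MIdx k q) → Fin (mdims n c q i)) :
    unglueIdx n c q hcq idx q
      = (finProdFinEquiv.symm (Fin.cast (mdims_at_c n c q hcq) (idx ⟨c, hcq⟩))).2 := by
  unfold unglueIdx
  rw [dif_pos rfl]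
  exact cast_self _ _

lemma unglueIdx_c (n : Fin k → ℕ) (c q : Fin k) (hcq : c ≠ q)
    (idx : (i : MIdx k q) → Fin (mdims n c q i)) :
    unglueIdx n c q hcq idx c
      = (finProdFinEquiv.symm (Fin.cast (mdims_at_c n c q hcq) (idx ⟨c, hcq⟩))).1 := by
  unfold unglueIdx
  rw [dif_neg hcq, dif_pos rfl]
  exact cast_self _ _

lemma unglueIdx_ne (n : Fin k → ℕ) (c q : Fin k) (hcq : c ≠ q)
    (idx : (i : MIdx k q) → Fin (mdims n c q i)) {i : Fin k} (hiq : i ≠ q) (hic : ¬ i = c) :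
    unglueIdx n c q hcq idx i = Fin.cast (mdims_ne n c q hiq hic) (idx ⟨i, hiq⟩) := by
  unfold unglueIdx
  rw [dif_neg hiq, dif_neg hic]

/-- the index-gluing map -/
def glueIdx (n : Fin k → ℕ) (c q : Fin k) (hcq : c ≠ q) (e : Idx n) (i : MIdx k q) :
    Fin (mdims n c q i) :=
  if h : i.1 = c then
    Fin.cast (show n c * n q = mdims n c q i from (by simp [mdims, h]))
      (finProdFinEquiv (e c, e q))
  else
    Fin.cast (show n i.1 = mdims n c q i from (by simp [mdims, h])) (e i.1)

lemma glueIdx_c (n : Fin k → ℕ) (c q : Fin k) (hcq : c ≠ q) (e : Idx n) :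
    glueIdx n c q hcq e ⟨c, hcq⟩
      = Fin.cast (mdims_at_c n c q hcq).symm (finProdFinEquiv (e c, e q)) := by
  unfold glueIdx
  rw [dif_pos rfl]

lemma glueIdx_ne (n : Fin k → ℕ) (c q : Fin k) (hcq : c ≠ q) (e : Idx n)
    {i : Fin k} (hiq : i ≠ q) (hic : ¬ i = c) :
    glueIdx n c q hcq e ⟨i, hiq⟩ = Fin.cast (mdims_ne n c q hiq hic).symm (e i) := by
  unfold glueIdx
  rw [dif_neg hic]

lemma unglue_glue (n : Fin k → ℕ) (c q : Fin k) (hcq : c ≠ q) (e : Idx n) :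
    unglueIdx n c q hcq (glueIdx n c q hcq e) = e := by
  funext i
  by_cases hiq : i = q
  · subst hiq
    rw [unglueIdx_q, glueIdx_c, cast_cast, Equiv.symm_apply_apply]
  · by_cases hic : i = c
    · subst hic
      rw [unglueIdx_c, glueIdx_c, cast_cast, Equiv.symm_apply_apply]
    · rw [unglueIdx_ne n c q hcq _ hiq hic, glueIdx_ne n c q hcq e hiq hic, cast_cast]

lemma mergeAt_glue (n : Fin k → ℕ) (c q : Fin k) (hcq : c ≠ q) (T : Tensor n) (e : Idx n) :
    mergeAt n c q hcq T (glueIdx n c q hcq e) = T e := by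
  rw [mergeAt_eq, unglue_glue]

/-- equivalence between the complement of `{c, q}` in `Fin k` and the complement of the
merged index in `MIdx k q` -/
def eMI (c q : Fin k) (hcq : c ≠ q) :
    {x : Fin k // x ≠ c ∧ x ≠ q} ≃ {x : MIdx k q // x ≠ ⟨c, hcq⟩} where
  toFun i := ⟨⟨i.1, i.2.2⟩, fun h => i.2.1 (congrArg Subtype.val h)⟩
  invFun x := ⟨x.1.1, ⟨fun h => x.2 (Subtype.ext h), x.1.2⟩⟩
  left_inv i := rfl
  right_inv x := rfl

/-- Forward direction: merging preserves membership in the partially orthogonal class. -/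
lemma memPG_mergeAt (n : Fin k → ℕ) (Orth : Fin k → Prop) (r : ℕ) (T : Tensor n)
    (c q : Fin k) (hcq : c ≠ q) (h : memPG n Orth r T) :
    memPG (mdims n c q) (fun i => Orth i.1) r (mergeAt n c q hcq T) := by
  obtain ⟨σ, a, hunit, horth, hdec⟩ := h
  refine ⟨σ, fun i j t =>
    if h' : i.1 = c then
      a c j ((finProdFinEquiv.symm (Fin.cast (show mdims n c q i = n c * n q from
        (by simp [mdims, h'])) t)).1)
        * a q j ((finProdFinEquiv.symm (Fin.cast (show mdims n c q i = n c * n q from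
        (by simp [mdims, h'])) t)).2)
    else a i.1 j (Fin.cast (show mdims n c q i = n i.1 from (by simp [mdims, h'])) t),
    ?_, ?_, ?_⟩
  · -- unit columns
    rintro ⟨i, hiq⟩ j
    by_cases hic : i = c
    · subst hic
      simp only [dif_pos]
      refine Eq.trans (sum_cast (mdims_at_c n i q hiq) (fun u =>
        (a i j (finProdFinEquiv.symm u).1 * a q j (finProdFinEquiv.symm u).2)
          * (a i j (finProdFinEquiv.symm u).1 * a q j (finProdFinEquiv.symm u).2))) ?_
      refine Eq.trans (Equiv.sum_comp finProdFinEquiv.symm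
        (fun p : Fin (n i) × Fin (n q) =>
          (a i j p.1 * a q j p.2) * (a i j p.1 * a q j p.2))) ?_
      refine Eq.trans (Fintype.sum_prod_type _) ?_
      rw [sum_kron_mul, hunit i j, hunit q j, one_mul]
    · simp only [dif_neg hic]
      exact Eq.trans (sum_cast (mdims_ne n c q hiq hic) (fun u => a i j u * a i j u))
        (hunit i j)
  · -- orthonormal columns
    rintro ⟨i, hiq⟩ hOi j j'
    by_cases hic : i = c
    · subst hic
      simp only [dif_pos]
      refine Eq.trans (sum_cast (mdims_at_c n i q hiq) (fun u =>
        (a i j (finProdFinEquiv.symm u).1 * a q j (finProdFinEquiv.symm u).2)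
          * (a i j' (finProdFinEquiv.symm u).1 * a q j' (finProdFinEquiv.symm u).2))) ?_
      refine Eq.trans (Equiv.sum_comp finProdFinEquiv.symm
        (fun p : Fin (n i) × Fin (n q) =>
          (a i j p.1 * a q j p.2) * (a i j' p.1 * a q j' p.2))) ?_
      refine Eq.trans (Fintype.sum_prod_type _) ?_
      rw [sum_kron_mul, horth i hOi j j']
      by_cases hjj : j = j'
      · rw [if_pos hjj, hjj, hunit q j', one_mul]
      · rw [if_neg hjj, zero_mul]
    · simp only [dif_neg hic]
      exact Eq.trans (sum_cast (mdims_ne n c q hiq hic) (fun u => a i j u * a i j' u))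
        (horth i hOi j j')
  · -- the decomposition
    funext idx
    rw [mergeAt_eq, hdec]
    refine Finset.sum_congr rfl fun j _ => ?_
    congr 1
    symm
    rw [prod_split1 (⟨c, hcq⟩ : MIdx k q)]
    rw [← Equiv.prod_comp (eMI c q hcq)]
    rw [prod_split2 c q hcq (fun i => a i j (unglueIdx n c q hcq idx i))]
    congr 1
    · dsimp only
      rw [dif_pos rfl, unglueIdx_c, unglueIdx_q]
    · refine Finset.prod_congr rfl fun i _ => ?_
      dsimp only
      rw [dif_neg (show ¬ ((eMI c q hcq) i).1.1 = c from i.2.1)]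
      rw [unglueIdx_ne n c q hcq idx i.2.2 i.2.1]
      rfl
lemma dec_eval (n : Fin k → ℕ) (c q : Fin k) (hcq : c ≠ q) (T : Tensor n) {r : ℕ}
    (σ : Fin r → ℝ) (A : (i : MIdx k q) → Fin r → Fin (mdims n c q i) → ℝ)
    (hdec : mergeAt n c q hcq T = fun idx => ∑ j, σ j * ∏ i, A i j (idx i)) (e : Idx n) :
    T e = ∑ j, σ j * ∏ i, A i j (glueIdx n c q hcq e i) := by
  rw [← mergeAt_glue n c q hcq T e, hdec]

lemma prod_family_orth {ι : Type*} [Fintype ι] [DecidableEq ι] {m : ι → Type*}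
    [∀ i, Fintype (m i)] {r : ℕ} (f : (i : ι) → Fin r → m i → ℝ)
    (hunit : ∀ i j, ∑ t, f i j t * f i j t = 1)
    (i0 : ι) (h0 : ∀ j j', ∑ t, f i0 j t * f i0 j' t = if j = j' then (1:ℝ) else 0)
    (j j' : Fin r) :
    ∑ g : (i : ι) → m i, (∏ i, f i j (g i)) * (∏ i, f i j' (g i))
      = if j = j' then (1:ℝ) else 0 := by
  have h1 : ∀ g : (i : ι) → m i, (∏ i, f i j (g i)) * (∏ i, f i j' (g i))
      = ∏ i, (f i j (g i) * f i j' (g i)) := fun g => (Finset.prod_mul_distrib).symm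
  rw [Finset.sum_congr rfl (fun g _ => h1 g), sum_pi_prod (fun i t => f i j t * f i j' t)]
  by_cases hjj : j = j'
  · subst hjj
    rw [if_pos rfl]
    exact Finset.prod_eq_one (fun i _ => hunit i j)
  · rw [if_neg hjj]
    exact Finset.prod_eq_zero (Finset.mem_univ i0) (by rw [h0 j j', if_neg hjj])

/-- spectator indices, w.r.t. three distinguished indices -/
abbrev SpT (c2 c1 q : Fin k) : Type := {x : Fin k // x ≠ c2 ∧ x ≠ c1 ∧ x ≠ q}

def eSpect (c2 c1 q : Fin k) (h2q : c2 ≠ q) (h1q : c1 ≠ q) :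
    SpT c2 c1 q ≃ {x : MIdx k q // x ≠ ⟨c2, h2q⟩ ∧ x ≠ ⟨c1, h1q⟩} where
  toFun i := ⟨⟨i.1, i.2.2.2⟩,
    ⟨fun h => i.2.1 (congrArg Subtype.val h), fun h => i.2.2.1 (congrArg Subtype.val h)⟩⟩
  invFun x := ⟨x.1.1, ⟨fun h => x.2.1 (Subtype.ext h), fun h => x.2.2 (Subtype.ext h), x.1.2⟩⟩
  left_inv _ := rfl
  right_inv _ := rfl

/-- assemble a full multi-index from a spectator part and three distinguished indices -/
def asmIdx (n : Fin k → ℕ) (c2 c1 q : Fin k)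
    (g : (i : SpT c2 c1 q) → Fin (n i.1))
    (x : Fin (n c2)) (y : Fin (n c1)) (z : Fin (n q)) : Idx n := fun i =>
  if h2 : i = c2 then Fin.cast (congrArg n h2).symm x
  else if h1 : i = c1 then Fin.cast (congrArg n h1).symm y
  else if hq : i = q then Fin.cast (congrArg n hq).symm z
  else g ⟨i, h2, h1, hq⟩

section asm
variable {n : Fin k → ℕ} {c2 c1 q : Fin k} {g : (i : SpT c2 c1 q) → Fin (n i.1)}
  {x : Fin (n c2)} {y : Fin (n c1)} {z : Fin (n q)}

lemma asm_c2 : asmIdx n c2 c1 q g x y z c2 = x := by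
  unfold asmIdx
  rw [dif_pos rfl]
  exact cast_self _ _

lemma asm_c1 (h21 : c2 ≠ c1) : asmIdx n c2 c1 q g x y z c1 = y := by
  unfold asmIdx
  rw [dif_neg (fun h => h21 h.symm), dif_pos rfl]
  exact cast_self _ _

lemma asm_q (h2q : c2 ≠ q) (h1q : c1 ≠ q) : asmIdx n c2 c1 q g x y z q = z := by
  unfold asmIdx
  rw [dif_neg (fun h => h2q h.symm), dif_neg (fun h => h1q h.symm), dif_pos rfl]
  exact cast_self _ _

lemma asm_spect (i : SpT c2 c1 q) : asmIdx n c2 c1 q g x y z i.1 = g i := by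
  unfold asmIdx
  rw [dif_neg i.2.1, dif_neg i.2.2.1, dif_neg i.2.2.2]

lemma asm_surj (e : Idx n) :
    asmIdx n c2 c1 q (fun i => e i.1) (e c2) (e c1) (e q) = e := by
  funext i
  unfold asmIdx
  by_cases h2 : i = c2
  · subst h2
    rw [dif_pos rfl]
    exact cast_self _ _
  by_cases h1 : i = c1
  · subst h1
    rw [dif_neg h2, dif_pos rfl]
    exact cast_self _ _
  by_cases hq : i = q
  · subst hq
    rw [dif_neg h2, dif_neg h1, dif_pos rfl]
    exact cast_self _ _
  · rw [dif_neg h2, dif_neg h1, dif_neg hq]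
end asm

/-- Backward direction workhorse: from the two merged memberships, recover membership. -/
lemma memPG_unmerge (n : Fin k → ℕ) (Orth : Fin k → Prop) (r : ℕ) (T : Tensor n)
    (c2 c1 q i0 : Fin k)
    (h21 : c2 ≠ c1) (h2q : c2 ≠ q) (h1q : c1 ≠ q)
    (hi02 : i0 ≠ c2) (hi01 : i0 ≠ c1) (hi0q : i0 ≠ q)
    (hO2 : Orth c2) (hO1 : Orth c1) (hOi0 : Orth i0) (hOq : ¬ Orth q)
    (D1 : memPG (mdims n c1 q) (fun i => Orth i.1) r (mergeAt n c1 q h1q T))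
    (D2 : memPG (mdims n c2 q) (fun i => Orth i.1) r (mergeAt n c2 q h2q T)) :
    memPG n Orth r T := by
  classical
  obtain ⟨σ, A1, unit1, orth1, dec1⟩ := D1
  obtain ⟨τ, A2, unit2, orth2, dec2⟩ := D2
  -- the four grouped factor families
  set Ea : Fin r → ((i : SpT c2 c1 q) → Fin (n i.1)) → ℝ := fun j g =>
    ∏ i : SpT c2 c1 q, A1 ⟨i.1, i.2.2.2⟩ j
      (Fin.cast (mdims_ne n c1 q i.2.2.2 i.2.2.1).symm (g i)) with hEa
  set aa : Fin r → Fin (n c2) → ℝ := fun j x =>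
    A1 ⟨c2, h2q⟩ j (Fin.cast (mdims_ne n c1 q h2q h21).symm x) with haa
  set Bb : Fin r → Fin (n c1) → Fin (n q) → ℝ := fun j y z =>
    A1 ⟨c1, h1q⟩ j (Fin.cast (mdims_at_c n c1 q h1q).symm (finProdFinEquiv (y, z))) with hBb
  set Ff : Fin r → ((i : SpT c2 c1 q) → Fin (n i.1)) → ℝ := fun j g =>
    ∏ i : SpT c2 c1 q, A2 ⟨i.1, i.2.2.2⟩ j
      (Fin.cast (mdims_ne n c2 q i.2.2.2 i.2.1).symm (g i)) with hFf
  set Cc : Fin r → Fin (n c2) → Fin (n q) → ℝ := fun j x z =>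
    A2 ⟨c2, h2q⟩ j (Fin.cast (mdims_at_c n c2 q h2q).symm (finProdFinEquiv (x, z))) with hCc
  set cc : Fin r → Fin (n c1) → ℝ := fun j y =>
    A2 ⟨c1, h1q⟩ j (Fin.cast (mdims_ne n c2 q h1q (fun h => h21 h.symm)).symm y) with hcc
  -- orthonormality of the grouped spectator factors
  have hE : ∀ j j', ∑ g, Ea j g * Ea j' g = if j = j' then (1:ℝ) else 0 := by
    intro j j'
    simp only [hEa]
    refine prod_family_orth (fun (i : SpT c2 c1 q) jj (t : Fin (n i.1)) =>
      A1 ⟨i.1, i.2.2.2⟩ jj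
      (Fin.cast (mdims_ne n c1 q i.2.2.2 i.2.2.1).symm t)) ?_ ⟨i0, hi02, hi01, hi0q⟩ ?_ j j'
    · intro i jj
      exact Eq.trans (sum_cast (mdims_ne n c1 q i.2.2.2 i.2.2.1).symm
        (fun u => A1 ⟨i.1, i.2.2.2⟩ jj u * A1 ⟨i.1, i.2.2.2⟩ jj u))
        (unit1 ⟨i.1, i.2.2.2⟩ jj)
    · intro jj jj'
      exact Eq.trans (sum_cast (mdims_ne n c1 q hi0q hi01).symm
        (fun u => A1 ⟨i0, hi0q⟩ jj u * A1 ⟨i0, hi0q⟩ jj' u))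
        (orth1 ⟨i0, hi0q⟩ hOi0 jj jj')
  have hF : ∀ j j', ∑ g, Ff j g * Ff j' g = if j = j' then (1:ℝ) else 0 := by
    intro j j'
    simp only [hFf]
    refine prod_family_orth (fun (i : SpT c2 c1 q) jj (t : Fin (n i.1)) =>
      A2 ⟨i.1, i.2.2.2⟩ jj
      (Fin.cast (mdims_ne n c2 q i.2.2.2 i.2.1).symm t)) ?_ ⟨i0, hi02, hi01, hi0q⟩ ?_ j j'
    · intro i jj
      exact Eq.trans (sum_cast (mdims_ne n c2 q i.2.2.2 i.2.1).symm
        (fun u => A2 ⟨i.1, i.2.2.2⟩ jj u * A2 ⟨i.1, i.2.2.2⟩ jj u))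
        (unit2 ⟨i.1, i.2.2.2⟩ jj)
    · intro jj jj'
      exact Eq.trans (sum_cast (mdims_ne n c2 q hi0q hi02).symm
        (fun u => A2 ⟨i0, hi0q⟩ jj u * A2 ⟨i0, hi0q⟩ jj' u))
        (orth2 ⟨i0, hi0q⟩ hOi0 jj jj')
  have ha : ∀ j j', ∑ x, aa j x * aa j' x = if j = j' then (1:ℝ) else 0 := by
    intro j j'
    simp only [haa]
    exact Eq.trans (sum_cast (mdims_ne n c1 q h2q h21).symm
      (fun u => A1 ⟨c2, h2q⟩ j u * A1 ⟨c2, h2q⟩ j' u)) (orth1 ⟨c2, h2q⟩ hO2 j j')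
  have hc : ∀ j j', ∑ y, cc j y * cc j' y = if j = j' then (1:ℝ) else 0 := by
    intro j j'
    simp only [hcc]
    exact Eq.trans (sum_cast (mdims_ne n c2 q h1q (fun h => h21 h.symm)).symm
      (fun u => A2 ⟨c1, h1q⟩ j u * A2 ⟨c1, h1q⟩ j' u)) (orth2 ⟨c1, h1q⟩ hO1 j j')
  have hB : ∀ j, ∑ y, ∑ z, Bb j y z * Bb j y z = 1 := by
    intro j
    simp only [hBb]
    refine Eq.trans ?_ (unit1 ⟨c1, h1q⟩ j)
    refine Eq.trans (Fintype.sum_prod_type (fun p : Fin (n c1) × Fin (n q) =>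
      A1 ⟨c1, h1q⟩ j (Fin.cast (mdims_at_c n c1 q h1q).symm (finProdFinEquiv p))
        * A1 ⟨c1, h1q⟩ j (Fin.cast (mdims_at_c n c1 q h1q).symm (finProdFinEquiv p)))).symm ?_
    refine Eq.trans (Equiv.sum_comp finProdFinEquiv (fun t =>
      A1 ⟨c1, h1q⟩ j (Fin.cast (mdims_at_c n c1 q h1q).symm t)
        * A1 ⟨c1, h1q⟩ j (Fin.cast (mdims_at_c n c1 q h1q).symm t))) ?_
    exact sum_cast (mdims_at_c n c1 q h1q).symm
      (fun t => A1 ⟨c1, h1q⟩ j t * A1 ⟨c1, h1q⟩ j t)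
  -- evaluating the two decompositions at assembled indices
  have hne12 : (⟨c2, h2q⟩ : MIdx k q) ≠ ⟨c1, h1q⟩ := fun h => h21 (congrArg Subtype.val h)
  have dec1' : ∀ g x y z, T (asmIdx n c2 c1 q g x y z)
      = ∑ j, σ j * (Ea j g * (aa j x * Bb j y z)) := by
    intro g x y z
    rw [dec_eval n c1 q h1q T σ A1 dec1 (asmIdx n c2 c1 q g x y z)]
    refine Finset.sum_congr rfl fun j _ => ?_
    congr 1
    rw [prod_split2 (⟨c2, h2q⟩ : MIdx k q) (⟨c1, h1q⟩ : MIdx k q) hne12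
      (fun i => A1 i j (glueIdx n c1 q h1q (asmIdx n c2 c1 q g x y z) i))]
    rw [← Equiv.prod_comp (eSpect c2 c1 q h2q h1q)]
    have p1 : A1 ⟨c2, h2q⟩ j (glueIdx n c1 q h1q (asmIdx n c2 c1 q g x y z) ⟨c2, h2q⟩)
        = aa j x := by
      rw [glueIdx_ne n c1 q h1q _ h2q h21, asm_c2, haa]
    have p2 : A1 ⟨c1, h1q⟩ j (glueIdx n c1 q h1q (asmIdx n c2 c1 q g x y z) ⟨c1, h1q⟩)
        = Bb j y z := by
      rw [glueIdx_c, asm_c1 h21, asm_q h2q h1q, hBb]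
    have p3 : ∏ i : SpT c2 c1 q, A1 ((eSpect c2 c1 q h2q h1q) i).1 j
        (glueIdx n c1 q h1q (asmIdx n c2 c1 q g x y z) ((eSpect c2 c1 q h2q h1q) i).1)
        = Ea j g := by
      simp only [hEa]
      refine Finset.prod_congr rfl fun i _ => ?_
      have he : ((eSpect c2 c1 q h2q h1q) i).1 = (⟨i.1, i.2.2.2⟩ : MIdx k q) := rfl
      rw [he, glueIdx_ne n c1 q h1q _ i.2.2.2 i.2.2.1, asm_spect i]
    rw [p1, p2, p3]
    ring
  have dec2' : ∀ g x y z, T (asmIdx n c2 c1 q g x y z)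
      = ∑ j, τ j * (Ff j g * (Cc j x z * cc j y)) := by
    intro g x y z
    rw [dec_eval n c2 q h2q T τ A2 dec2 (asmIdx n c2 c1 q g x y z)]
    refine Finset.sum_congr rfl fun j _ => ?_
    congr 1
    rw [prod_split2 (⟨c2, h2q⟩ : MIdx k q) (⟨c1, h1q⟩ : MIdx k q) hne12
      (fun i => A2 i j (glueIdx n c2 q h2q (asmIdx n c2 c1 q g x y z) i))]
    rw [← Equiv.prod_comp (eSpect c2 c1 q h2q h1q)]
    have p1 : A2 ⟨c2, h2q⟩ j (glueIdx n c2 q h2q (asmIdx n c2 c1 q g x y z) ⟨c2, h2q⟩)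
        = Cc j x z := by
      rw [glueIdx_c, asm_c2, asm_q h2q h1q, hCc]
    have p2 : A2 ⟨c1, h1q⟩ j (glueIdx n c2 q h2q (asmIdx n c2 c1 q g x y z) ⟨c1, h1q⟩)
        = cc j y := by
      rw [glueIdx_ne n c2 q h2q _ h1q (fun h => h21 h.symm), asm_c1 h21, hcc]
    have p3 : ∏ i : SpT c2 c1 q, A2 ((eSpect c2 c1 q h2q h1q) i).1 j
        (glueIdx n c2 q h2q (asmIdx n c2 c1 q g x y z) ((eSpect c2 c1 q h2q h1q) i).1)
        = Ff j g := by
      simp only [hFf]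
      refine Finset.prod_congr rfl fun i _ => ?_
      have he : ((eSpect c2 c1 q h2q h1q) i).1 = (⟨i.1, i.2.2.2⟩ : MIdx k q) := rfl
      rw [he, glueIdx_ne n c2 q h2q _ i.2.2.2 i.2.1, asm_spect i]
    rw [p1, p2, p3]
    ring
  have hT : ∀ g x y z, ∑ j, σ j * (Ea j g * (aa j x * Bb j y z))
      = ∑ j, τ j * (Ff j g * (Cc j x z * cc j y)) := by
    intro g x y z
    rw [← dec1' g x y z, ← dec2' g x y z]
  obtain ⟨u, v, hu, hv, hfac⟩ := core σ τ Ea Ff aa Bb Cc cc hE hF ha hc hB hT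
  -- assemble the final decomposition
  refine ⟨σ, fun i j t =>
    if h1 : i = c1 then u j (Fin.cast (congrArg n h1) t)
    else if hq : i = q then v j (Fin.cast (congrArg n hq) t)
    else A1 ⟨i, hq⟩ j (Fin.cast (mdims_ne n c1 q hq h1).symm t), ?_, ?_, ?_⟩
  · -- unit columns
    intro i j
    by_cases h1 : i = c1
    · subst h1
      simp only [dif_pos]
      refine Eq.trans (Finset.sum_congr rfl fun t _ => ?_) (hu j j |>.trans (if_pos rfl))
      rw [cast_self]
    · by_cases hq : i = q
      · subst hq
        simp only [dif_neg h1, dif_pos]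
        refine Eq.trans (Finset.sum_congr rfl fun t _ => ?_) (hv j)
        rw [cast_self]
      · simp only [dif_neg h1, dif_neg hq]
        exact Eq.trans (sum_cast (mdims_ne n c1 q hq h1).symm
          (fun u => A1 ⟨i, hq⟩ j u * A1 ⟨i, hq⟩ j u)) (unit1 ⟨i, hq⟩ j)
  · -- orthonormal columns
    intro i hOi j j'
    by_cases h1 : i = c1
    · subst h1
      simp only [dif_pos]
      refine Eq.trans (Finset.sum_congr rfl fun t _ => ?_) (hu j j')
      rw [cast_self]
    · by_cases hq : i = q
      · exact absurd (hq ▸ hOi) hOq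
      · simp only [dif_neg h1, dif_neg hq]
        exact Eq.trans (sum_cast (mdims_ne n c1 q hq h1).symm
          (fun u => A1 ⟨i, hq⟩ j u * A1 ⟨i, hq⟩ j' u)) (orth1 ⟨i, hq⟩ hOi j j')
  · -- the decomposition
    funext e
    rw [← asm_surj (c2 := c2) (c1 := c1) (q := q) e]
    rw [dec1' (fun i => e i.1) (e c2) (e c1) (e q)]
    refine Finset.sum_congr rfl fun j _ => ?_
    rw [prod_split3 c2 c1 q h21 h2q h1q]
    beta_reduce
    have p2 : (if h1 : c2 = c1 then u j (Fin.cast (congrArg n h1) (asmIdx n c2 c1 q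
          (fun i => e i.1) (e c2) (e c1) (e q) c2))
        else if hq : c2 = q then v j (Fin.cast (congrArg n hq) (asmIdx n c2 c1 q
          (fun i => e i.1) (e c2) (e c1) (e q) c2))
        else A1 ⟨c2, hq⟩ j (Fin.cast (mdims_ne n c1 q hq h1).symm (asmIdx n c2 c1 q
          (fun i => e i.1) (e c2) (e c1) (e q) c2)))
        = aa j (e c2) := by
      rw [dif_neg h21, dif_neg h2q, asm_c2, haa]
    have p1 : (if h1 : c1 = c1 then u j (Fin.cast (congrArg n h1) (asmIdx n c2 c1 q
          (fun i => e i.1) (e c2) (e c1) (e q) c1))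
        else if hq : c1 = q then v j (Fin.cast (congrArg n hq) (asmIdx n c2 c1 q
          (fun i => e i.1) (e c2) (e c1) (e q) c1))
        else A1 ⟨c1, hq⟩ j (Fin.cast (mdims_ne n c1 q hq h1).symm (asmIdx n c2 c1 q
          (fun i => e i.1) (e c2) (e c1) (e q) c1)))
        = u j (e c1) := by
      rw [dif_pos rfl, asm_c1 h21, cast_self]
    have pq : (if h1 : q = c1 then u j (Fin.cast (congrArg n h1) (asmIdx n c2 c1 q
          (fun i => e i.1) (e c2) (e c1) (e q) q))
        else if hq : q = q then v j (Fin.cast (congrArg n hq) (asmIdx n c2 c1 q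
          (fun i => e i.1) (e c2) (e c1) (e q) q))
        else A1 ⟨q, hq⟩ j (Fin.cast (mdims_ne n c1 q hq h1).symm (asmIdx n c2 c1 q
          (fun i => e i.1) (e c2) (e c1) (e q) q)))
        = v j (e q) := by
      rw [dif_neg (fun h => h1q h.symm), dif_pos rfl, asm_q h2q h1q, cast_self]
    rw [p2, p1, pq]
    have p3 : ∏ i : SpT c2 c1 q,
        (if h1 : i.1 = c1 then u j (Fin.cast (congrArg n h1) (asmIdx n c2 c1 q
          (fun i => e i.1) (e c2) (e c1) (e q) i.1))
        else if hq : i.1 = q then v j (Fin.cast (congrArg n hq) (asmIdx n c2 c1 q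
          (fun i => e i.1) (e c2) (e c1) (e q) i.1))
        else A1 ⟨i.1, hq⟩ j (Fin.cast (mdims_ne n c1 q hq h1).symm (asmIdx n c2 c1 q
          (fun i => e i.1) (e c2) (e c1) (e q) i.1)))
        = Ea j (fun i => e i.1) := by
      simp only [hEa]
      refine Finset.prod_congr rfl fun i _ => ?_
      rw [dif_neg i.2.2.1, dif_neg i.2.2.2, asm_spect i]
    rw [p3]
    have hf := hfac j (e c1) (e q)
    linear_combination (Ea j (fun i => e i.1) * aa j (e c2)) * hf

/-- Lemma: merging factors.
Let `k ≥ 4` and `k > s ≥ 3`.  A tensor `T` lies in `P_s(n,r)` iff the `(k-1)`-way tensor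
obtained by merging the `s`-th and `(s+1)`-th factors lies in `P_s(m,r)` and the one
obtained by merging the `(s-1)`-th and `(s+1)`-th factors lies in `P_s(m',r)`
(positions being `1`-indexed, so the merged factors are at `0`-indexed positions
`s-1, s` and `s-2, s` respectively; in both merged tuples the orthonormal factors are
those at `0`-indexed positions `< s`). -/
theorem memP_iff_merged
    (k s r : ℕ) (n : Fin k → ℕ) (hk : 4 ≤ k) (hs3 : 3 ≤ s) (hsk : s < k)
    (hr : ∀ i : Fin k, (i : ℕ) < s → r ≤ n i)
    (T : Tensor n) :
    memPG n (fun i : Fin k => (i : ℕ) < s) r T ↔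
      (memPG (mdims n ⟨s - 1, by omega⟩ ⟨s, by omega⟩)
          (fun i => ((i.1 : Fin k) : ℕ) < s) r
          (mergeAt n ⟨s - 1, by omega⟩ ⟨s, by omega⟩
            (by simp only [ne_eq, Fin.mk.injEq]; omega) T) ∧
       memPG (mdims n ⟨s - 2, by omega⟩ ⟨s, by omega⟩)
          (fun i => ((i.1 : Fin k) : ℕ) < s) r
          (mergeAt n ⟨s - 2, by omega⟩ ⟨s, by omega⟩
            (by simp only [ne_eq, Fin.mk.injEq]; omega) T)) := by
  constructor
  · intro h
    exact ⟨memPG_mergeAt n (fun i : Fin k => (i : ℕ) < s) r T ⟨s - 1, by omega⟩ ⟨s, by omega⟩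
        (by simp only [ne_eq, Fin.mk.injEq]; omega) h,
      memPG_mergeAt n (fun i : Fin k => (i : ℕ) < s) r T ⟨s - 2, by omega⟩ ⟨s, by omega⟩
        (by simp only [ne_eq, Fin.mk.injEq]; omega) h⟩
  · rintro ⟨D1, D2⟩
    exact memPG_unmerge n (fun i : Fin k => (i : ℕ) < s) r T
      ⟨s - 2, by omega⟩ ⟨s - 1, by omega⟩ ⟨s, by omega⟩ ⟨0, by omega⟩
      (by simp only [ne_eq, Fin.mk.injEq]; omega)
      (by simp only [ne_eq, Fin.mk.injEq]; omega)
      (by simp only [ne_eq, Fin.mk.injEq]; omega)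
      (by simp only [ne_eq, Fin.mk.injEq]; omega)
      (by simp only [ne_eq, Fin.mk.injEq]; omega)
      (by simp only [ne_eq, Fin.mk.injEq]; omega)
      (show s - 2 < s by omega) (show s - 1 < s by omega) (show 0 < s by omega)
      (show ¬ s < s by omega) D1 D2


end POT
end

section
/- The minimization problem (LRPOTA): minimize ‖A − (U^{(1)},…,U^{(k)})·diag_k(λ_1,…,λ_r)‖² over U^{(i)} ∈ V(r,n_i) for i ≤ s, U^{(i)} ∈ B(r,n_i) for i > s and λ ∈ ℝ^r, is equivalent to the maximization problem (mLRPOTA): maximize f(U) = Σ_{j=1}^r λ_j(U)², where λ_j(U) = ⟨A, u_j^{(1)}⊗⋯⊗u_j^{(k)}⟩, over the same constraint set for U. Precisely: (i) if (Û, diag_k(λ̂)) optimizes LRPOTA then Û optimizes mLRPOTA, λ̂_j = λ_j(Û) for all j, and the optimal values are ‖A‖² − Σ_j λ̂_j² and Σ_j λ̂_j² respectively; (ii) conversely, if Û optimizes mLRPOTA then (Û, diag_k(λ_1(Û),…,λ_r(Û))) optimizes LRPOTA. -/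
open scoped BigOperators

namespace POT

variable {k : ℕ}

section Aux

variable {n : Fin k → ℕ} {r : ℕ}

lemma sum_prod_eq (f : (i : Fin k) → Fin (n i) → ℝ) :
    ∑ idx : Idx n, ∏ i, f i (idx i) = ∏ i, ∑ t, f i t := by
  rw [Finset.prod_univ_sum, Fintype.piFinset_univ]

lemma prod_inner_delta {s : ℕ} (hk : 3 ≤ k) (hs1 : 1 ≤ s) {U : Fac n r} (hU : Feas s U)
    (j j' : Fin r) :
    (∏ i, ∑ t, U i j t * U i j' t) = if j = j' then (1 : ℝ) else 0 := by
  by_cases h : j = j'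
  · subst h
    rw [if_pos rfl]
    exact Finset.prod_eq_one fun i _ => hU.1 i j
  · rw [if_neg h]
    have h0 : (0 : ℕ) < k := by omega
    refine Finset.prod_eq_zero (Finset.mem_univ (⟨0, h0⟩ : Fin k)) ?_
    have := hU.2 ⟨0, h0⟩ (by show (0:ℕ) < s; omega) j j'
    rw [this, if_neg h]

lemma resid_expand (A : Tensor n) {U : Fac n r} (x : Fin r → ℝ)
    (hδ : ∀ j j', (∏ i, ∑ t, U i j t * U i j' t) = if j = j' then (1 : ℝ) else 0) :
    resid A (U, x) = tdot A A - fOf A U + ∑ j, (x j - lamOf A U j) ^ 2 := by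
  have hP2 : ∑ idx : Idx n,
      (∑ j, x j * ∏ i, U i j (idx i)) * (∑ j, x j * ∏ i, U i j (idx i))
      = ∑ j, x j ^ 2 := by
    have e1 : ∀ idx : Idx n,
        (∑ j, x j * ∏ i, U i j (idx i)) * (∑ j, x j * ∏ i, U i j (idx i))
        = ∑ j, ∑ j', (x j * x j') * ∏ i, U i j (idx i) * U i j' (idx i) := by
      intro idx
      rw [Finset.sum_mul_sum]
      refine Finset.sum_congr rfl fun j _ => Finset.sum_congr rfl fun j' _ => ?_
      rw [Finset.prod_mul_distrib]; ring
    calc ∑ idx : Idx n,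
          (∑ j, x j * ∏ i, U i j (idx i)) * (∑ j, x j * ∏ i, U i j (idx i))
        = ∑ idx : Idx n, ∑ j, ∑ j', (x j * x j') * ∏ i, U i j (idx i) * U i j' (idx i) :=
          Finset.sum_congr rfl fun idx _ => e1 idx
      _ = ∑ j, ∑ idx : Idx n, ∑ j', (x j * x j') * ∏ i, U i j (idx i) * U i j' (idx i) :=
          Finset.sum_comm
      _ = ∑ j, ∑ j', ∑ idx : Idx n, (x j * x j') * ∏ i, U i j (idx i) * U i j' (idx i) :=
          Finset.sum_congr rfl fun j _ => Finset.sum_comm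
      _ = ∑ j, ∑ j', (x j * x j') * ∏ i, ∑ t, U i j t * U i j' t := by
          refine Finset.sum_congr rfl fun j _ => Finset.sum_congr rfl fun j' _ => ?_
          rw [← Finset.mul_sum, sum_prod_eq (fun i t => U i j t * U i j' t)]
      _ = ∑ j, x j ^ 2 := by
          simp only [hδ, mul_ite, mul_one, mul_zero]
          simp [pow_two]
  have hcross : ∑ idx : Idx n, A idx * (∑ j, x j * ∏ i, U i j (idx i))
      = ∑ j, x j * lamOf A U j := by
    calc ∑ idx : Idx n, A idx * (∑ j, x j * ∏ i, U i j (idx i))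
        = ∑ idx : Idx n, ∑ j, x j * (A idx * ∏ i, U i j (idx i)) := by
          refine Finset.sum_congr rfl fun idx _ => ?_
          rw [Finset.mul_sum]
          exact Finset.sum_congr rfl fun j _ => by ring
      _ = ∑ j, ∑ idx : Idx n, x j * (A idx * ∏ i, U i j (idx i)) := Finset.sum_comm
      _ = ∑ j, x j * lamOf A U j := by
          refine Finset.sum_congr rfl fun j _ => ?_
          rw [← Finset.mul_sum]; rfl
  have key : resid A (U, x)
      = tdot A A - 2 * (∑ j, x j * lamOf A U j) + ∑ j, x j ^ 2 := by
    unfold resid tdot phi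
    have e : ∀ idx : Idx n,
        (A idx - ∑ j, x j * ∏ i, U i j (idx i)) * (A idx - ∑ j, x j * ∏ i, U i j (idx i))
        = A idx * A idx - 2 * (A idx * ∑ j, x j * ∏ i, U i j (idx i))
          + (∑ j, x j * ∏ i, U i j (idx i)) * (∑ j, x j * ∏ i, U i j (idx i)) := by
      intro idx; ring
    rw [Finset.sum_congr rfl fun idx _ => e idx]
    rw [Finset.sum_add_distrib, Finset.sum_sub_distrib, ← Finset.mul_sum, hcross, hP2]
  rw [key]
  have : ∑ j, (x j - lamOf A U j) ^ 2
      = ∑ j, (x j ^ 2 - 2 * (x j * lamOf A U j) + lamOf A U j ^ 2) :=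
    Finset.sum_congr rfl fun j _ => by ring
  rw [this, Finset.sum_add_distrib, Finset.sum_sub_distrib, ← Finset.mul_sum]
  unfold fOf
  ring

end Aux

/-- Proposition: maximization equivalence.
The minimization problem (LRPOTA) over `V_{n,r}` is equivalent to the maximization
problem (mLRPOTA) of `f(U) = ∑ⱼ λⱼ(U)²` over the feasible factor tuples:
(i) a minimizer `(Û, λ̂)` of LRPOTA yields a maximizer `Û` of mLRPOTA with
`λ̂ⱼ = λⱼ(Û)` and respective optimal values `‖A‖² − ∑ λ̂ⱼ²` and `∑ λ̂ⱼ²`;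
(ii) conversely a maximizer `Û` of mLRPOTA together with `λⱼ(Û)` minimizes LRPOTA. -/
theorem maximization_equivalence
    (k s r : ℕ) (n : Fin k → ℕ) (hk : 3 ≤ k) (hs1 : 1 ≤ s) (hsk : s ≤ k)
    (hr : ∀ i : Fin k, (i : ℕ) < s → r ≤ n i) (A : Tensor n) :
    (∀ y : PSpace n r, y ∈ Vset s n r →
      (∀ z ∈ Vset s n r, resid A y ≤ resid A z) →
      ((∀ j, y.2 j = lamOf A y.1 j) ∧
       (∀ U : Fac n r, Feas s U → fOf A U ≤ fOf A y.1) ∧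
       resid A y = tdot A A - fOf A y.1)) ∧
    (∀ U : Fac n r, Feas s U →
      (∀ U' : Fac n r, Feas s U' → fOf A U' ≤ fOf A U) →
      ∀ z ∈ Vset s n r, resid A (U, fun j => lamOf A U j) ≤ resid A z) := by
  have hre : ∀ (U : Fac n r) (x : Fin r → ℝ), Feas s U →
      resid A (U, x) = tdot A A - fOf A U + ∑ j, (x j - lamOf A U j) ^ 2 :=
    fun U x hU => resid_expand A x (prod_inner_delta hk hs1 hU)
  have hmin : ∀ (U : Fac n r), Feas s U →
      resid A (U, fun j => lamOf A U j) = tdot A A - fOf A U := by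
    intro U hU
    rw [hre U _ hU]
    simp
  constructor
  · rintro ⟨U, x⟩ hy hopt
    have hU : Feas s U := hy
    have h1 : resid A (U, x) ≤ tdot A A - fOf A U := by
      have := hopt (U, fun j => lamOf A U j) hU
      rwa [hmin U hU] at this
    have hsum : ∑ j, (x j - lamOf A U j) ^ 2 ≤ 0 := by
      have := hre U x hU
      linarith
    have hzero : ∀ j ∈ Finset.univ, (x j - lamOf A U j) ^ 2 = 0 := by
      intro j _
      have hnn : ∀ j ∈ Finset.univ, (0:ℝ) ≤ (x j - lamOf A U j) ^ 2 :=
        fun j _ => sq_nonneg _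
      have := (Finset.sum_eq_zero_iff_of_nonneg hnn).1
        (le_antisymm hsum (Finset.sum_nonneg hnn))
      exact this j (Finset.mem_univ j)
    have hxl : ∀ j, x j = lamOf A U j := by
      intro j
      have := hzero j (Finset.mem_univ j)
      nlinarith [sq_nonneg (x j - lamOf A U j)]
    refine ⟨hxl, ?_, ?_⟩
    · intro U' hU'
      have h2 : resid A (U, x) ≤ resid A (U', fun j => lamOf A U' j) :=
        hopt _ hU'
      rw [hmin U' hU'] at h2
      have h3 : resid A (U, x) = tdot A A - fOf A U := by
        rw [hre U x hU, Finset.sum_eq_zero hzero]; ring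
      linarith
    · rw [hre U x hU, Finset.sum_eq_zero hzero]; ring
  · rintro U hU hopt ⟨U', x'⟩ hz
    have hU' : Feas s U' := hz
    rw [hmin U hU, hre U' x' hU']
    have := hopt U' hU'
    have hnn : (0:ℝ) ≤ ∑ j, (x' j - lamOf A U' j) ^ 2 :=
      Finset.sum_nonneg fun j _ => sq_nonneg _
    linarith

end POT
end
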